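/- arXiv:1806.00269 — 10 statements merged into one kernel-verified Lean document; each statement's English description precedes it below -/
import Mathlib

section
/- The algebra of symmetric functions invariant under all substitutions α_y (which set x₁ = y, x₂ = -y and shift the remaining variables) is generated by the odd power sums p_{2k+1} = Σ_j x_j^{2k+1}, k ∈ ℕ. -/
/-! Each `α_y` translates the variables by `alphaShift y`, which vanishes on the even
coordinates (odd power sums) and equals `2 (y²)^(j+1)` at `p_{2j+2}`. The translations fixing a
polynomial form a subspace: scalar multiples are allowed because `t ↦ P(x + t • c)` is a
one-variable polynomial that is constant on `ℕ`. Restricted to the finitely many odd coordinates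
occurring in `P`, the shifts for `y = 1, …, M` are rescaled rows of a nonsingular Vandermonde
matrix in `y²`, so an invariant `P` is fixed by every translation of its odd coordinates and is
therefore a polynomial in the even ones. -/

open MvPolynomial

/-- The ring of symmetric functions `Λ` is freely generated by the power sums
`p_1, p_2, …`; we model it as the polynomial ring `MvPolynomial ℕ ℂ`, where the
variable `X k` represents the power sum `p_{k+1}`.  The substitution `α_y`
(setting `x₁ = y`, `x₂ = -y` and shifting the remaining variables) acts on the
power sums by `p_k ↦ p_k + y^k + (-y)^k`. -/
noncomputable def alphaSubst (y : ℝ) : MvPolynomial ℕ ℂ →ₐ[ℂ] MvPolynomial ℕ ℂ :=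
  MvPolynomial.aeval (fun k => X k + C ((y : ℂ) ^ (k + 1) + (-(y : ℂ)) ^ (k + 1)))

namespace MvPolynomial

variable {σ R : Type*} [CommRing R]

theorem eval_aeval (x : σ → R) (g : σ → MvPolynomial σ R) (p : MvPolynomial σ R) :
    eval x (aeval g p) = eval (fun k => eval x (g k)) p := by
  rw [aeval_eq_bind₁]
  exact eval₂Hom_bind₁ _ _ _ _

noncomputable def translate (c : σ → R) : MvPolynomial σ R →ₐ[R] MvPolynomial σ R :=
  aeval fun k => X k + C (c k)

theorem translate_X (c : σ → R) (k : σ) : translate c (X k) = X k + C (c k) :=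
  aeval_X _ _

theorem eval_translate (x c : σ → R) (p : MvPolynomial σ R) :
    eval x (translate c p) = eval (x + c) p := by
  simp only [translate, eval_aeval, map_add, eval_X, eval_C]
  rfl

theorem translate_congr {p : MvPolynomial σ R} {c c' : σ → R}
    (h : ∀ k ∈ p.vars, c k = c' k) :
    translate c p = translate c' p :=
  eval₂Hom_congr' rfl (fun k hk _ => by rw [h k hk]) rfl

theorem translate_add (c c' : σ → R) (p : MvPolynomial σ R) :
    translate (c + c') p = translate c (translate c' p) := by
  rw [← AlgHom.comp_apply]
  congr 1
  refine algHom_ext fun k => ?_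
  simp [translate, add_assoc]

theorem translate_zero : translate (0 : σ → R) = AlgHom.id R _ :=
  algHom_ext fun k => by simp [translate]

theorem translate_smul_eq_self [IsDomain R] [CharZero R] {p : MvPolynomial σ R} {c : σ → R}
    (h : translate c p = p) (t : R) : translate (t • c) p = p := by
  have hnat : ∀ n : ℕ, translate ((n : R) • c) p = p := by
    intro n
    induction n with
    | zero => simp [translate_zero]
    | succ n ih => rw [Nat.cast_succ, add_smul, one_smul, translate_add, h, ih]
  refine funext fun x => ?_
  set q : Polynomial R :=
    aeval (fun k => Polynomial.C (x k) + Polynomial.C (c k) * Polynomial.X) p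
  have hq : ∀ s : R, q.eval s = eval (x + s • c) p := by
    intro s
    have hid : (Polynomial.evalRingHom s).comp (algebraMap R (Polynomial R)) = RingHom.id R :=
      RingHom.ext fun r => by simp
    simp only [q, aeval_def, polynomial_eval_eval₂, hid, Polynomial.eval_add, Polynomial.eval_C,
      Polynomial.eval_mul, Polynomial.eval_X]
    show _ = eval₂ (RingHom.id R) (x + s • c) p
    congr 1
    funext k
    simp [mul_comm]
  have hconst : q = Polynomial.C (eval x p) := by
    refine Polynomial.eq_of_infinite_eval_eq _ _ ?_
    refine Set.infinite_of_injective_forall_mem Nat.cast_injective fun n => ?_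
    simp only [Set.mem_ofPred_eq, Polynomial.eval_C, hq, ← eval_translate, hnat]
  rw [eval_translate, ← hq, hconst, Polynomial.eval_C]

noncomputable def translateStabilizer [IsDomain R] [CharZero R] (p : MvPolynomial σ R) :
    Submodule R (σ → R) where
  carrier := {c | translate c p = p}
  zero_mem' := by simp [translate_zero]
  add_mem' {c c'} hc hc' := by simp_all [translate_add]
  smul_mem' t _ hc := translate_smul_eq_self hc t

variable (R) in
def oddSupported : Submodule R (ℕ → R) where
  carrier := {c | ∀ k, Even k → c k = 0}
  zero_mem' _ _ := rfl
  add_mem' hc hc' k hk := by simp [hc k hk, hc' k hk]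
  smul_mem' t _ hc k hk := by simp [hc k hk]

theorem mem_adjoin_X_two_mul_of_forall_translate_eq_self [IsDomain R] [Infinite R]
    {p : MvPolynomial ℕ R} (h : ∀ c ∈ oddSupported R, translate c p = p) :
    p ∈ Algebra.adjoin R (Set.range fun k : ℕ => (X (2 * k) : MvPolynomial ℕ R)) := by
  set g : ℕ → MvPolynomial ℕ R := fun k => if Even k then X k else 0
  have hg : aeval g p = p := funext fun x => by
    have hx : (fun k => eval x (g k)) = x + fun k => if Even k then 0 else -x k := by
      funext k
      by_cases hk : Even k <;> simp [g, hk]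
    rw [eval_aeval, hx, ← eval_translate, h _ fun k hk => if_pos hk]
  have hrange : Set.range g ⊆
      Algebra.adjoin R (Set.range fun k : ℕ => (X (2 * k) : MvPolynomial ℕ R)) := by
    refine Set.range_subset_iff.2 fun k => ?_
    by_cases hk : Even k
    · obtain ⟨j, rfl⟩ := hk.two_dvd
      simp only [g, if_pos (even_two_mul j)]
      exact Algebra.subset_adjoin ⟨j, rfl⟩
    · simp [g, hk]
  rw [← hg]
  exact Algebra.adjoin_le hrange (aeval_range (R := R) g ▸ AlgHom.mem_range_self _ p)

end MvPolynomial

theorem Submodule.eq_top_of_forall_pow_mem {K : Type*} [Field K] {n : ℕ}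
    (V : Submodule K (Fin n → K)) {u : Fin n → K} (hu : Function.Injective u)
    (h : ∀ a, (fun j : Fin n => u a ^ (j : ℕ)) ∈ V) : V = ⊤ := by
  have hli := Matrix.linearIndependent_rows_of_det_ne_zero
    (Matrix.det_vandermonde_ne_zero_iff.2 hu)
  have hspan := hli.span_eq_top_of_card_eq_finrank' (by simp)
  rw [eq_top_iff, ← hspan, Submodule.span_le]
  rintro _ ⟨a, rfl⟩
  exact h a

def oddCoords (R : Type*) [CommRing R] (M : ℕ) : (ℕ → R) →ₗ[R] (Fin M → R) :=
  LinearMap.funLeft R R fun j : Fin M => 2 * (j : ℕ) + 1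

def alphaShift (y : ℝ) : ℕ → ℂ := fun k => (y : ℂ) ^ (k + 1) + (-(y : ℂ)) ^ (k + 1)

theorem alphaSubst_eq_translate (y : ℝ) : alphaSubst y = MvPolynomial.translate (alphaShift y) :=
  rfl

theorem alphaShift_mem_oddSupported (y : ℝ) : alphaShift y ∈ oddSupported ℂ :=
  fun k hk => by simp [alphaShift, (Even.add_one hk).neg_pow]

theorem alphaShift_two_mul_add_one (y : ℝ) (j : ℕ) :
    alphaShift y (2 * j + 1) = 2 * (y : ℂ) ^ 2 * ((y : ℂ) ^ 2) ^ j := by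
  rw [alphaShift, (odd_two_mul_add_one j).add_one.neg_pow]
  ring

theorem alphaSubst_X_two_mul (y : ℝ) (k : ℕ) : alphaSubst y (X (2 * k)) = X (2 * k) := by
  rw [alphaSubst_eq_translate, translate_X, alphaShift_mem_oddSupported y _ (even_two_mul k), C_0,
    add_zero]

theorem map_oddCoords_eq_top {p : MvPolynomial ℕ ℂ}
    (h : ∀ y : ℝ, 0 < y → alphaSubst y p = p) (M : ℕ) :
    (translateStabilizer p ⊓ oddSupported ℂ).map (oddCoords ℂ M) = ⊤ := by
  set u : Fin M → ℂ := fun a => ((a : ℂ) + 1) ^ 2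
  refine Submodule.eq_top_of_forall_pow_mem _ (u := u) (fun a b hab => ?_) fun a => ?_
  · simp only [u] at hab
    have : (((a : ℕ) + 1) ^ 2 : ℕ) = (((b : ℕ) + 1) ^ 2 : ℕ) := by exact_mod_cast hab
    exact Fin.ext (by simpa using Nat.pow_left_injective two_ne_zero this)
  · have hmem : oddCoords ℂ M (alphaShift ((a : ℕ) + 1))
        ∈ (translateStabilizer p ⊓ oddSupported ℂ).map (oddCoords ℂ M) :=
      ⟨_, ⟨h _ (by positivity), alphaShift_mem_oddSupported _⟩, rfl⟩
    have hrow : oddCoords ℂ M (alphaShift ((a : ℕ) + 1))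
        = (2 * u a) • fun j : Fin M => u a ^ (j : ℕ) := by
      funext j
      simp [oddCoords, u, alphaShift_two_mul_add_one, mul_assoc]
    have hu : 2 * u a ≠ 0 :=
      mul_ne_zero two_ne_zero (pow_ne_zero _ (Nat.cast_add_one_ne_zero (a : ℕ)))
    rwa [hrow, Submodule.smul_mem_iff _ hu] at hmem

theorem translate_eq_self_of_mem_oddSupported {p : MvPolynomial ℕ ℂ}
    (h : ∀ y : ℝ, 0 < y → alphaSubst y p = p) {c : ℕ → ℂ} (hc : c ∈ oddSupported ℂ) :
    MvPolynomial.translate c p = p := by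
  obtain ⟨M, hM⟩ : ∃ M, ∀ k ∈ p.vars, k < 2 * M :=
    ⟨p.vars.sup id + 1, fun k hk => by
      have : k ≤ p.vars.sup id := Finset.le_sup (f := id) hk
      omega⟩
  obtain ⟨c', ⟨hc'p, hc'odd⟩, hc'c⟩ :
      oddCoords ℂ M c ∈ (translateStabilizer p ⊓ oddSupported ℂ).map (oddCoords ℂ M) := by
    rw [map_oddCoords_eq_top h M]
    trivial
  refine (translate_congr fun k hk => ?_).trans hc'p
  obtain ⟨j, rfl | rfl⟩ := Nat.even_or_odd' k
  · rw [hc _ (even_two_mul j), hc'odd _ (even_two_mul j)]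
  · exact (congrFun hc'c ⟨j, by have := hM _ hk; omega⟩).symm

/-- The subalgebra of symmetric functions invariant under all `α_y` (`y > 0`)
is generated by the odd power sums `p_{2k+1}` (i.e. the variables `X (2k)`). -/
theorem invariant_algebra_generated_by_odd_power_sums :
    {P : MvPolynomial ℕ ℂ | ∀ y : ℝ, 0 < y → alphaSubst y P = P}
      = ↑(Algebra.adjoin ℂ (Set.range fun k : ℕ => (X (2 * k) : MvPolynomial ℕ ℂ))) := by
  ext P
  refine ⟨fun h => mem_adjoin_X_two_mul_of_forall_translate_eq_self fun c hc =>
    translate_eq_self_of_mem_oddSupported h hc, fun hP y _ => ?_⟩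
  exact AlgHom.adjoin_le_equalizer (alphaSubst y) (AlgHom.id ℂ _)
    (by rintro _ ⟨k, rfl⟩; exact alphaSubst_X_two_mul y k) hP
end

section
/- The sum of sign(p) over all pairings p of {1, …, n} equals 1, for every n ≥ 0. -/
/-!
Positions and values are counted from `0`. The identity encodes the pairing `{0,1}, {2,3}, …`,
and all other pairings cancel in pairs under a sign-reversing involution `σ ↦ σ * swap a b`.
View `σ` as a permutation `π` of `ℕ` fixing every `i ≥ n`, and let `s` be the even number such
that `π` fixes `0, …, s-1` but not both of `s, s+1`. The values `s, s+1` are then the two smallest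
ones outside this prefix, and either
* both are left entries, at positions `s` and `s+2`: exchange their partners
  (positions `s+1` and `s+3`); or
* `n` is odd and one of them is the unpaired value at position `n-1`, the other one sits at
  position `s`: exchange the two values (positions `s` and `n-1`).
Either move preserves `s` and the case, hence is an involution, and it flips the sign.
-/

open Finset

/-- A pairing of `{1,…,n}` into `⌊n/2⌋` disjoint ordered pairs `(ℓ < r)` is
encoded by the unique permutation `σ` of `Fin n` listing the pairs as
`(σ(2j), σ(2j+1))` with `σ(2j) < σ(2j+1)` and the pairs ordered by their left
entries (the unpaired index, for odd `n`, sits in the last position); the sign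
of the pairing is the sign of this permutation. -/
def IsPairingPerm (n : ℕ) (σ : Equiv.Perm (Fin n)) : Prop :=
  (∀ j : Fin (n / 2),
      σ ⟨2 * (j : ℕ), by have := j.isLt; omega⟩
        < σ ⟨2 * (j : ℕ) + 1, by have := j.isLt; omega⟩) ∧
  (∀ j j' : Fin (n / 2), j < j' →
      σ ⟨2 * (j : ℕ), by have := j.isLt; omega⟩
        < σ ⟨2 * (j' : ℕ), by have := j'.isLt; omega⟩)

instance (n : ℕ) (σ : Equiv.Perm (Fin n)) : Decidable (IsPairingPerm n σ) := by
  unfold IsPairingPerm; infer_instance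

open Equiv

def IsPairingOn (n : ℕ) (π : Perm ℕ) : Prop :=
  (∀ k < n / 2, π (2 * k) < π (2 * k + 1)) ∧
    ∀ k k', k < k' → k' < n / 2 → π (2 * k) < π (2 * k')

def toNatPerm {n : ℕ} (σ : Perm (Fin n)) : Perm ℕ := σ.extendDomain Fin.equivSubtype

section

variable {n : ℕ}

theorem toNatPerm_apply_val (σ : Perm (Fin n)) (i : Fin n) : toNatPerm σ i = σ i :=
  Perm.extendDomain_apply_image σ Fin.equivSubtype i

theorem toNatPerm_apply_of_le (σ : Perm (Fin n)) {i : ℕ} (hi : n ≤ i) : toNatPerm σ i = i :=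
  Perm.extendDomain_apply_not_subtype σ Fin.equivSubtype (by omega)

theorem toNatPerm_mul (σ τ : Perm (Fin n)) : toNatPerm (σ * τ) = toNatPerm σ * toNatPerm τ :=
  (Perm.extendDomain_mul Fin.equivSubtype σ τ).symm

theorem toNatPerm_eq_one_iff {σ : Perm (Fin n)} : toNatPerm σ = 1 ↔ σ = 1 :=
  Perm.extendDomain_eq_one_iff

theorem isPairingPerm_iff {σ : Perm (Fin n)} :
    IsPairingPerm n σ ↔ IsPairingOn n (toNatPerm σ) := by
  have hval (i : ℕ) (hi : i < n) : (σ ⟨i, hi⟩ : ℕ) = toNatPerm σ i :=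
    (toNatPerm_apply_val σ ⟨i, hi⟩).symm
  simp only [IsPairingPerm, IsPairingOn, Fin.forall_iff, Fin.lt_def, hval]
  exact and_congr_right' ⟨fun h k k' hkk hk' => h k (by omega) k' hk' hkk,
    fun h k _ k' hk' hkk => h k k' hkk hk'⟩

theorem isPairingPerm_one : IsPairingPerm n 1 := by
  rw [isPairingPerm_iff, toNatPerm_eq_one_iff.mpr rfl]
  exact ⟨fun k _ => by simp, fun k k' hkk _ => by simpa using hkk⟩

end

def IsFirstMovedPair (π : Perm ℕ) (s : ℕ) : Prop :=
  2 ∣ s ∧ (∀ i < s, π i = i) ∧ ¬(π s = s ∧ π (s + 1) = s + 1)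

noncomputable def firstMovedPair (π : Perm ℕ) : ℕ := 2 * (sInf {i | π i ≠ i} / 2)

section

variable {n s : ℕ} {π : Perm ℕ}

theorem le_apply_of_forall_lt_apply_eq (h : ∀ i < s, π i = i) {i : ℕ} (hi : s ≤ i) :
    s ≤ π i := by
  by_contra! hlt
  have := π.injective (h _ hlt)
  omega

theorem apply_lt_of_forall_le_apply_eq (h : ∀ i, n ≤ i → π i = i) {i : ℕ} (hi : i < n) :
    π i < n := by
  by_contra! hle
  have := π.injective (h _ hle)
  omega

theorem isFirstMovedPair_firstMovedPair (hπ : π ≠ 1) :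
    IsFirstMovedPair π (firstMovedPair π) := by
  have hne : {i | π i ≠ i}.Nonempty := by
    by_contra! h
    exact hπ (Equiv.ext fun i => by simpa using Set.eq_empty_iff_forall_notMem.mp h i)
  set t := sInf {i | π i ≠ i}
  have ht : π t ≠ t := Nat.sInf_mem hne
  have hlt : ∀ i < t, π i = i := fun i hi => by simpa using Nat.notMem_of_lt_sInf hi
  refine ⟨dvd_mul_right 2 _, fun i hi => hlt i (by unfold firstMovedPair at hi; omega), ?_⟩
  rintro ⟨h0, h1⟩
  have : t = firstMovedPair π ∨ t = firstMovedPair π + 1 := by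
    unfold firstMovedPair
    omega
  rcases this with h | h <;> rw [h] at ht <;> contradiction

theorem IsFirstMovedPair.ne_one (hs : IsFirstMovedPair π s) : π ≠ 1 := by
  rintro rfl
  exact hs.2.2 ⟨rfl, rfl⟩

theorem IsFirstMovedPair.firstMovedPair_eq (hs : IsFirstMovedPair π s) :
    firstMovedPair π = s := by
  obtain ⟨hs2, hfix, hmove⟩ := hs
  have hmem : s ∈ {i | π i ≠ i} ∨ s + 1 ∈ {i | π i ≠ i} := by
    by_contra! h
    simp only [Set.mem_ofPred_eq, not_not] at h
    exact hmove h
  have hle : sInf {i | π i ≠ i} ≤ s + 1 := by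
    rcases hmem with h | h
    · exact (Nat.sInf_le h).trans s.le_succ
    · exact Nat.sInf_le h
  have hge : s ≤ sInf {i | π i ≠ i} := by
    by_contra! hlt
    exact Nat.sInf_mem (hmem.elim (⟨_, ·⟩) (⟨_, ·⟩)) (hfix _ hlt)
  unfold firstMovedPair
  omega

theorem IsPairingOn.exists_prev_left_lt (h : IsPairingOn n π) {x : ℕ} (hx0 : 0 < x)
    (hx : x < 2 * (n / 2)) : ∃ p, 2 ∣ p ∧ p < x ∧ x ≤ p + 2 ∧ π p < π x := by
  obtain ⟨k, rfl | rfl⟩ := Nat.even_or_odd' x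
  · exact ⟨2 * (k - 1), dvd_mul_right 2 _, by omega, by omega, h.2 _ _ (by omega) (by omega)⟩
  · exact ⟨2 * k, dvd_mul_right 2 _, by omega, by omega, h.1 k (by omega)⟩

theorem IsPairingOn.firstMovedPair_cases (h : IsPairingOn n π) (hfix : ∀ i, n ≤ i → π i = i)
    (hs : IsFirstMovedPair π s) :
    (π s = s ∧ π (s + 2) = s + 1 ∧ s + 3 < n) ∨
      (n % 2 = 1 ∧ s + 2 < n ∧
        (π s = s ∧ π (n - 1) = s + 1 ∨ π s = s + 1 ∧ π (n - 1) = s)) := by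
  obtain ⟨hs2, hbelow, hmove⟩ := hs
  have hge : ∀ i, s ≤ i → s ≤ π i := fun i => le_apply_of_forall_lt_apply_eq hbelow
  have hsn : s + 1 < n := by
    by_contra! hns
    refine hmove ⟨?_, hfix (s + 1) hns⟩
    rcases lt_or_ge s n with hsn | hsn
    · have := apply_lt_of_forall_le_apply_eq hfix hsn
      have := hge s le_rfl
      omega
    · exact hfix s hsn
  have position (v : ℕ) (hv : s ≤ v) (hvn : v < n) : ∃ x, π x = v ∧ s ≤ x ∧ x < n := by
    obtain ⟨x, rfl⟩ := π.surjective v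
    refine ⟨x, rfl, ?_, ?_⟩
    · by_contra! hlt
      have := hbelow x hlt
      omega
    · by_contra! hle
      have := hfix x hle
      omega
  obtain ⟨q, hq, hqs, hqn⟩ := position s le_rfl (by omega)
  obtain ⟨r, hr, hrs, hrn⟩ := position (s + 1) (by omega) (by omega)
  -- positions `≥ 2 * (n / 2)` hold the unpaired value
  have hq' : q = s ∨ 2 * (n / 2) ≤ q := by
    by_contra! hlt
    obtain ⟨p, hp2, hpq, hqp, hlt⟩ := h.exists_prev_left_lt (x := q) (by omega) hlt.2
    have := hge p (by omega)
    omega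
  have hr' : r = s ∨ 2 * (n / 2) ≤ r ∨ (r < 2 * (n / 2) ∧ q < r ∧ r ≤ q + 2) := by
    by_contra! hlt
    obtain ⟨p, hp2, hpr, hrp, hlt'⟩ := h.exists_prev_left_lt (x := r) (by omega) hlt.2.1
    have hp : π p = s := by
      have := hge p (by omega)
      omega
    have := π.injective (hp.trans hq.symm)
    omega
  rcases hq' with rfl | hq'
  · have hr1 : r ≠ q + 1 := by
      rintro rfl
      exact hmove ⟨hq, hr⟩
    have hrq : r ≠ q := by
      rintro rfl
      omega
    rcases hr' with rfl | hr' | hr'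
    · omega
    · obtain rfl : r = n - 1 := by omega
      exact .inr ⟨by omega, by omega, .inl ⟨hq, hr⟩⟩
    · obtain rfl : r = q + 2 := by omega
      exact .inl ⟨hq, hr, by omega⟩
  · obtain rfl : q = n - 1 := by omega
    rcases hr' with rfl | hr' | hr'
    · have : r ≠ n - 1 := by
        rintro h'
        rw [h'] at hr
        omega
      exact .inr ⟨by omega, by omega, .inr ⟨hr, hq⟩⟩
    · obtain rfl : r = n - 1 := by omega
      omega
    · omega

theorem IsPairingOn.of_lt_iff {π' : Perm ℕ} (h : IsPairingOn n π)
    (h' : ∀ i j, i < 2 * (n / 2) → j < 2 * (n / 2) → (π' i < π' j ↔ π i < π j)) :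
    IsPairingOn n π' :=
  ⟨fun k hk => (h' _ _ (by omega) (by omega)).mpr (h.1 k hk),
    fun k k' hkk hk' => (h' _ _ (by omega) (by omega)).mpr (h.2 k k' hkk hk')⟩

theorem IsPairingOn.mul_swap_add_one_add_three (h : IsPairingOn n π)
    (hge : ∀ i, s ≤ i → s ≤ π i) (h0 : π s = s) (h2 : π (s + 2) = s + 1) (hs2 : 2 ∣ s) :
    IsPairingOn n (π * swap (s + 1) (s + 3)) := by
  have h1 : s + 1 < π (s + 1) := by
    have := hge (s + 1) (by omega)
    have := π.injective.ne (show s + 1 ≠ s by omega)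
    have := π.injective.ne (show s + 1 ≠ s + 2 by omega)
    omega
  have h3 : s < π (s + 3) := by
    have := hge (s + 3) (by omega)
    have := π.injective.ne (show s + 3 ≠ s by omega)
    omega
  refine ⟨fun k hk => ?_, fun k k' hkk hk' => ?_⟩
  · simp only [Perm.mul_apply]
    rw [swap_apply_of_ne_of_ne (by omega) (by omega)]
    by_cases hk1 : 2 * k + 1 = s + 1
    · rw [hk1, swap_apply_left, show 2 * k = s by omega, h0]
      exact h3
    by_cases hk3 : 2 * k + 1 = s + 3
    · rw [hk3, swap_apply_right, show 2 * k = s + 2 by omega, h2]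
      exact h1
    rw [swap_apply_of_ne_of_ne hk1 hk3]
    exact h.1 k hk
  · simp only [Perm.mul_apply]
    rw [swap_apply_of_ne_of_ne (by omega) (by omega),
      swap_apply_of_ne_of_ne (by omega) (by omega)]
    exact h.2 k k' hkk hk'

theorem IsPairingOn.mul_swap_sub_one (h : IsPairingOn n π) (hn : n % 2 = 1) (hsn : s < n - 1)
    (hvals : π s = s ∧ π (n - 1) = s + 1 ∨ π s = s + 1 ∧ π (n - 1) = s) :
    IsPairingOn n (π * swap s (n - 1)) := by
  have hother : ∀ j, j ≠ s → j ≠ n - 1 → π j ≠ s ∧ π j ≠ s + 1 := by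
    intro j hjs hjn
    have := π.injective.ne hjs
    have := π.injective.ne hjn
    omega
  have happly : ∀ x, x < n - 1 →
      (π * swap s (n - 1)) x = if x = s then π (n - 1) else π x := by
    intro x hx
    split_ifs with hxs
    · rw [hxs, Perm.mul_apply, swap_apply_left]
    · rw [Perm.mul_apply, swap_apply_of_ne_of_ne hxs (by omega)]
  refine h.of_lt_iff fun i j hi hj => ?_
  rw [happly i (by omega), happly j (by omega)]
  split_ifs with his hjs hjs
  · simp [his, hjs]
  · subst his
    have := hother j hjs (by omega)
    omega
  · subst hjs
    have := hother i his (by omega)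
    omega
  · rfl

end

noncomputable def pairingSwap (n : ℕ) (π : Perm ℕ) : ℕ × ℕ :=
  let s := firstMovedPair π
  if π (n - 1) = s ∨ π (n - 1) = s + 1 then (s, n - 1) else (s + 1, s + 3)

section

variable {n s : ℕ} {π : Perm ℕ}

theorem IsFirstMovedPair.pairingSwap_eq_of_apply_add_two (hs : IsFirstMovedPair π s)
    (h0 : π s = s) (h2 : π (s + 2) = s + 1) (h3 : s + 3 < n) :
    pairingSwap n π = (s + 1, s + 3) := by
  have hs0 : π (n - 1) ≠ s := fun h => by
    have := π.injective (h.trans h0.symm)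
    omega
  have hs1 : π (n - 1) ≠ s + 1 := fun h => by
    have := π.injective (h.trans h2.symm)
    omega
  simp [pairingSwap, hs.firstMovedPair_eq, hs0, hs1]

theorem IsFirstMovedPair.pairingSwap_eq_of_apply_sub_one (hs : IsFirstMovedPair π s)
    (h : π (n - 1) = s ∨ π (n - 1) = s + 1) : pairingSwap n π = (s, n - 1) := by
  simp [pairingSwap, hs.firstMovedPair_eq, h]

theorem IsPairingOn.pairingSwap_spec (h : IsPairingOn n π) (hfix : ∀ i, n ≤ i → π i = i)
    (hπ : π ≠ 1) :
    ∃ a b, pairingSwap n π = (a, b) ∧ a ≠ b ∧ a < n ∧ b < n ∧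
      IsPairingOn n (π * swap a b) ∧ π * swap a b ≠ 1 ∧ pairingSwap n (π * swap a b) = (a, b) := by
  have hs := isFirstMovedPair_firstMovedPair hπ
  set s := firstMovedPair π
  have hge : ∀ i, s ≤ i → s ≤ π i := fun i => le_apply_of_forall_lt_apply_eq hs.2.1
  rcases h.firstMovedPair_cases hfix hs with ⟨h0, h2, h3⟩ | ⟨hn, hsn, hvals⟩
  · set π' := π * swap (s + 1) (s + 3)
    have h0' : π' s = s := by
      rw [Perm.mul_apply, swap_apply_of_ne_of_ne (by omega) (by omega), h0]
    have h2' : π' (s + 2) = s + 1 := by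
      rw [Perm.mul_apply, swap_apply_of_ne_of_ne (by omega) (by omega), h2]
    have hs' : IsFirstMovedPair π' s := by
      refine ⟨hs.1, fun i hi => ?_, fun ⟨_, h1⟩ => ?_⟩
      · rw [Perm.mul_apply, swap_apply_of_ne_of_ne (by omega) (by omega), hs.2.1 i hi]
      · rw [Perm.mul_apply, swap_apply_left, ← h2] at h1
        have := π.injective h1
        omega
    exact ⟨s + 1, s + 3, hs.pairingSwap_eq_of_apply_add_two h0 h2 h3, by omega, by omega, h3,
      h.mul_swap_add_one_add_three hge h0 h2 hs.1, hs'.ne_one,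
      hs'.pairingSwap_eq_of_apply_add_two h0' h2' h3⟩
  · set π' := π * swap s (n - 1)
    have hlast : π' (n - 1) = s ∨ π' (n - 1) = s + 1 := by
      rw [Perm.mul_apply, swap_apply_right]
      omega
    have hs' : IsFirstMovedPair π' s := by
      refine ⟨hs.1, fun i hi => ?_, fun ⟨h0, h1⟩ => ?_⟩
      · rw [Perm.mul_apply, swap_apply_of_ne_of_ne (by omega) (by omega), hs.2.1 i hi]
      · rw [Perm.mul_apply, swap_apply_left] at h0
        rw [Perm.mul_apply, swap_apply_of_ne_of_ne (by omega) (by omega)] at h1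
        have := π.injective.ne (show s + 1 ≠ s by omega)
        omega
    exact ⟨s, n - 1, hs.pairingSwap_eq_of_apply_sub_one (by omega), by omega, by omega,
      by omega, h.mul_swap_sub_one hn (by omega) hvals, hs'.ne_one,
      hs'.pairingSwap_eq_of_apply_sub_one hlast⟩

end

def finSwap (n : ℕ) (p : ℕ × ℕ) : Perm (Fin n) :=
  if h : p.1 < n ∧ p.2 < n then swap ⟨p.1, h.1⟩ ⟨p.2, h.2⟩ else 1

noncomputable def pairingPartner {n : ℕ} (σ : Perm (Fin n)) : Perm (Fin n) :=
  σ * finSwap n (pairingSwap n (toNatPerm σ))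

section

variable {n : ℕ}

theorem toNatPerm_finSwap {p : ℕ × ℕ} (h1 : p.1 < n) (h2 : p.2 < n) :
    toNatPerm (finSwap n p) = swap p.1 p.2 := by
  ext i
  rcases lt_or_ge i n with hi | hi
  · rw [show i = ((⟨i, hi⟩ : Fin n) : ℕ) from rfl, toNatPerm_apply_val]
    simp only [finSwap, h1, h2, and_self, dite_true, swap_apply_def, Fin.ext_iff]
    split_ifs <;> rfl
  · rw [toNatPerm_apply_of_le _ hi, swap_apply_of_ne_of_ne (by omega) (by omega)]

theorem finSwap_mul_self (p : ℕ × ℕ) : finSwap n p * finSwap n p = 1 := by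
  unfold finSwap
  split_ifs <;> simp

theorem sign_mul_finSwap (σ : Perm (Fin n)) {p : ℕ × ℕ} (hp : p.1 ≠ p.2) (h1 : p.1 < n)
    (h2 : p.2 < n) : Perm.sign (σ * finSwap n p) = -Perm.sign σ := by
  rw [finSwap, dif_pos ⟨h1, h2⟩, Perm.sign_mul,
    Perm.sign_swap (by simpa [Fin.ext_iff] using hp), mul_neg_one]

theorem IsPairingPerm.pairingPartner_spec {σ : Perm (Fin n)} (hσ : IsPairingPerm n σ)
    (h1 : σ ≠ 1) :
    IsPairingPerm n (pairingPartner σ) ∧ pairingPartner σ ≠ 1 ∧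
      pairingPartner (pairingPartner σ) = σ ∧
      Perm.sign (pairingPartner σ) = -Perm.sign σ := by
  obtain ⟨a, b, hp, hab, ha, hb, hpair, hne, hp'⟩ := (isPairingPerm_iff.mp hσ).pairingSwap_spec
    (fun _ => toNatPerm_apply_of_le σ) (mt toNatPerm_eq_one_iff.mp h1)
  have hnat : toNatPerm (pairingPartner σ) = toNatPerm σ * swap a b := by
    rw [pairingPartner, toNatPerm_mul, hp, toNatPerm_finSwap ha hb]
  refine ⟨isPairingPerm_iff.mpr (hnat ▸ hpair), fun h => hne ?_, ?_,
    by rw [pairingPartner, hp]; exact sign_mul_finSwap σ hab ha hb⟩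
  · rw [← hnat, h, toNatPerm_eq_one_iff]
  · rw [pairingPartner, hnat, hp', pairingPartner, hp, mul_assoc, finSwap_mul_self, mul_one]

end

theorem sum_sign_eq_zero_of_involution {α : Type*} [DecidableEq α] [Fintype α]
    (s : Finset (Perm α)) (g : Perm α → Perm α) (hmem : ∀ σ ∈ s, g σ ∈ s)
    (hinv : ∀ σ ∈ s, g (g σ) = σ) (hsign : ∀ σ ∈ s, Perm.sign (g σ) = -Perm.sign σ) :
    ∑ σ ∈ s, (Perm.sign σ : ℤ) = 0 :=
  sum_involution (fun σ _ => g σ) (fun σ hσ => by simp [hsign σ hσ])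
    (fun σ hσ _ h => units_ne_neg_self (Perm.sign σ) (by simpa [h] using hsign σ hσ)) hmem hinv

/-- The sum of the signs of all pairings of `{1,…,n}` equals `1`, for every
`n ≥ 0`. -/
theorem sum_pairing_signs (n : ℕ) :
    (∑ σ ∈ Finset.univ.filter (IsPairingPerm n), ((Equiv.Perm.sign σ : ℤ) : ℤ)) = 1 := by
  have h1 : (1 : Perm (Fin n)) ∈ univ.filter (IsPairingPerm n) := by simp [isPairingPerm_one]
  have hspec (σ) (hσ : σ ∈ (univ.filter (IsPairingPerm n)).erase 1) := by
    rw [mem_erase, mem_filter] at hσ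
    exact hσ.2.2.pairingPartner_spec hσ.1
  rw [← add_sum_erase _ _ h1, sum_sign_eq_zero_of_involution _ pairingPartner
    (fun σ hσ => mem_erase.mpr ⟨(hspec σ hσ).2.1, mem_filter.mpr ⟨mem_univ _, (hspec σ hσ).1⟩⟩)
    (fun σ hσ => (hspec σ hσ).2.2.1) (fun σ hσ => (hspec σ hσ).2.2.2)]
  simp
end

section
/- The meromorphic function M_n(ζ) = ∏_{i<j} tanh((ζ_i - ζ_j)/2) has a first-order pole at ζ₂ - ζ₁ = iπ, with residue res_{ζ₂-ζ₁=iπ} M_n(ζ) = -2 · M_{n-2}(ζ₃, …, ζ_n). -/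
/-!
Only the factor `tanh ((ζ₁ - ζ₂) / 2)` of `M_n` is singular at `ζ₂ = ζ₁ + iπ`, where it behaves
like `-2 / (ζ₂ - ζ₁ - iπ)`. For `j ≥ 3` the factors of the pairs `(1, j)` and `(2, j)` combine there
to `tanh x · tanh (x + iπ/2)` with `x = (ζ₁ - ζ_j) / 2`, which is `1` since
`tanh (x + iπ/2) = coth x`; the pairs inside `{3, …, n}` form `M_{n-2}(ζ₃, …, ζ_n)`.
-/

open Finset Filter Topology

theorem prod_pairs_lt_fin_succ {M : Type*} [CommMonoid M] {m : ℕ}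
    (F : Fin (m + 1) → Fin (m + 1) → M) :
    ∏ p ∈ univ.filter (fun p : Fin (m + 1) × Fin (m + 1) => p.1 < p.2), F p.1 p.2 =
      (∏ j : Fin m, F 0 j.succ) *
        ∏ p ∈ univ.filter (fun p : Fin m × Fin m => p.1 < p.2), F p.1.succ p.2.succ := by
  simp [prod_filter, Fintype.prod_prod_type, Fin.prod_univ_succ]

theorem prod_pairs_lt_fin_succ_succ {M : Type*} [CommMonoid M] {m : ℕ}
    (F : Fin (m + 2) → Fin (m + 2) → M) :
    ∏ p ∈ univ.filter (fun p : Fin (m + 2) × Fin (m + 2) => p.1 < p.2), F p.1 p.2 =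
      F 0 1 * (∏ j : Fin m, F 0 j.succ.succ * F 1 j.succ.succ) *
        ∏ p ∈ univ.filter (fun p : Fin m × Fin m => p.1 < p.2),
          F p.1.succ.succ p.2.succ.succ := by
  rw [prod_pairs_lt_fin_succ, prod_pairs_lt_fin_succ (fun i j => F i.succ j.succ),
    Fin.prod_univ_succ, prod_mul_distrib, Fin.succ_zero_eq_one]
  ac_rfl

namespace Complex

open Real

theorem sinh_add_pi_mul_I_div_two (z : ℂ) : sinh (z + π * I / 2) = I * cosh z := by
  have h : (π : ℂ) * I / 2 = (π / 2 : ℝ) * I := by push_cast; ring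
  rw [sinh_add, h, sinh_mul_I, cosh_mul_I, ← ofReal_sin, ← ofReal_cos, Real.sin_pi_div_two,
    Real.cos_pi_div_two]
  simp [mul_comm]

theorem cosh_add_pi_mul_I_div_two (z : ℂ) : cosh (z + π * I / 2) = I * sinh z := by
  have h : (π : ℂ) * I / 2 = (π / 2 : ℝ) * I := by push_cast; ring
  rw [cosh_add, h, sinh_mul_I, cosh_mul_I, ← ofReal_sin, ← ofReal_cos, Real.sin_pi_div_two,
    Real.cos_pi_div_two]
  simp [mul_comm]

theorem tanh_add_pi_mul_I_div_two (z : ℂ) : tanh (z + π * I / 2) = (tanh z)⁻¹ := by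
  rw [tanh_eq_sinh_div_cosh, tanh_eq_sinh_div_cosh, sinh_add_pi_mul_I_div_two,
    cosh_add_pi_mul_I_div_two, mul_div_mul_left _ _ I_ne_zero, inv_div]

theorem tanh_mul_tanh_add_pi_mul_I_div_two {z : ℂ} (hz : cosh z ≠ 0)
    (hz' : cosh (z + π * I / 2) ≠ 0) : tanh z * tanh (z + π * I / 2) = 1 := by
  rw [cosh_add_pi_mul_I_div_two, mul_ne_zero_iff] at hz'
  rw [tanh_add_pi_mul_I_div_two, mul_inv_cancel₀ (by simp [tanh_eq_sinh_div_cosh, hz, hz'.2])]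

theorem continuousAt_tanh {z : ℂ} (hz : cosh z ≠ 0) : ContinuousAt tanh z := by
  rw [show tanh = fun z => sinh z / cosh z from funext tanh_eq_sinh_div_cosh]
  exact continuous_sinh.continuousAt.div continuous_cosh.continuousAt hz

theorem tendsto_mul_inv_tanh_nhdsNE_zero :
    Tendsto (fun z => z * (tanh z)⁻¹) (𝓝[≠] 0) (𝓝 1) := by
  have hslope : Tendsto (slope sinh 0) (𝓝[≠] 0) (𝓝 1) := by
    simpa using hasDerivAt_iff_tendsto_slope.mp (hasDerivAt_sinh 0)
  have hcosh : Tendsto cosh (𝓝[≠] 0) (𝓝 1) := by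
    simpa using continuous_cosh.continuousAt.tendsto.mono_left
      (nhdsWithin_le_nhds (a := (0 : ℂ)))
  have hlim := hcosh.mul (hslope.inv₀ one_ne_zero)
  rw [inv_one, mul_one] at hlim
  refine hlim.congr fun z => ?_
  simp only [slope_def_field, sinh_zero, sub_zero, inv_div, tanh_eq_sinh_div_cosh]
  ring

theorem tendsto_const_sub_div_two_nhdsNE (c : ℂ) :
    Tendsto (fun w => (c - w) / 2) (𝓝[≠] c) (𝓝[≠] 0) := by
  refine tendsto_nhdsWithin_iff.mpr ⟨tendsto_nhdsWithin_of_tendsto_nhds ?_, ?_⟩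
  · have hcont : Continuous fun w : ℂ => (c - w) / 2 := by fun_prop
    simpa using hcont.tendsto c
  · filter_upwards [self_mem_nhdsWithin] with w hw
    simpa [sub_eq_zero] using Ne.symm hw

theorem tendsto_sub_mul_tanh_sub_div_two (a : ℂ) :
    Tendsto (fun w => (w - (a + π * I)) * tanh ((a - w) / 2))
      (𝓝[≠] (a + π * I)) (𝓝 (-2)) := by
  have hlim := (tendsto_mul_inv_tanh_nhdsNE_zero.comp
    (tendsto_const_sub_div_two_nhdsNE (a + π * I))).const_mul (-2)
  rw [mul_one] at hlim
  refine hlim.congr fun w => ?_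
  have hshift : (a + π * I - w) / 2 = (a - w) / 2 + π * I / 2 := by ring
  simp only [Function.comp_apply, hshift, tanh_add_pi_mul_I_div_two, inv_inv]
  ring

theorem tendsto_prod_tanh_mul_tanh_add_pi_mul_I {ι : Type*} [Fintype ι] (a : ℂ) (z : ι → ℂ)
    (h₀ : ∀ j, cosh ((a - z j) / 2) ≠ 0) (h₁ : ∀ j, cosh ((a + π * I - z j) / 2) ≠ 0) :
    Tendsto (fun w => ∏ j, tanh ((a - z j) / 2) * tanh ((w - z j) / 2))
      (𝓝 (a + π * I)) (𝓝 1) := by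
  have hshift (j : ι) : (a + π * I - z j) / 2 = (a - z j) / 2 + π * I / 2 := by ring
  have hone : ∏ j, tanh ((a - z j) / 2) * tanh ((a + π * I - z j) / 2) = 1 :=
    prod_eq_one fun j _ => by
      have hj := h₁ j
      rw [hshift] at hj ⊢
      exact tanh_mul_tanh_add_pi_mul_I_div_two (h₀ j) hj
  refine hone ▸ tendsto_finsetProd _ fun j _ => tendsto_const_nhds.mul ?_
  have hdiff : ContinuousAt (fun w : ℂ => (w - z j) / 2) (a + π * I) := by fun_prop
  exact (continuousAt_tanh (h₁ j)).tendsto.comp hdiff.tendsto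

end Complex

/-- The meromorphic function `M_n(ζ) = ∏_{i<j} tanh((ζ_i - ζ_j)/2)` has a
first-order pole at `ζ₂ - ζ₁ = iπ` with residue `-2 M_{n-2}(ζ₃,…,ζ_n)`:
letting the second variable `w` tend to `ζ₁ + iπ` (the remaining variables
being fixed and generic, i.e. no other factor is singular there),
`(w - (ζ₁ + iπ)) M_n(ζ₁, w, ζ₃, …, ζ_n)` tends to
`-2 ∏_{3 ≤ i < j ≤ n} tanh((ζ_i - ζ_j)/2)`. -/
theorem Modd_residue (n : ℕ) (ζ : Fin (n + 2) → ℂ)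
    (hgen : ∀ i j : Fin (n + 2), i < j → ¬(i = 0 ∧ j = 1) →
      Complex.cosh ((Function.update ζ 1 (ζ 0 + Real.pi * Complex.I) i
          - Function.update ζ 1 (ζ 0 + Real.pi * Complex.I) j) / 2) ≠ 0) :
    Tendsto
      (fun w : ℂ => (w - (ζ 0 + Real.pi * Complex.I)) *
        ∏ p ∈ Finset.univ.filter (fun p : Fin (n + 2) × Fin (n + 2) => p.1 < p.2),
          Complex.tanh ((Function.update ζ 1 w p.1 - Function.update ζ 1 w p.2) / 2))
      (𝓝[≠] (ζ 0 + Real.pi * Complex.I))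
      (𝓝 (-2 *
        ∏ p ∈ Finset.univ.filter (fun p : Fin n × Fin n => p.1 < p.2),
          Complex.tanh ((ζ p.1.succ.succ - ζ p.2.succ.succ) / 2))) := by
  have hcosh₀ (j : Fin n) : Complex.cosh ((ζ 0 - ζ j.succ.succ) / 2) ≠ 0 := by
    simpa [Fin.succ_succ_ne_one] using
      hgen 0 j.succ.succ (Fin.succ_pos _) fun h => Fin.succ_succ_ne_one j h.2
  have hcosh₁ (j : Fin n) :
      Complex.cosh ((ζ 0 + Real.pi * Complex.I - ζ j.succ.succ) / 2) ≠ 0 := by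
    simpa [Fin.succ_succ_ne_one] using
      hgen 1 j.succ.succ (Fin.one_lt_succ_succ _) fun h => Fin.succ_succ_ne_one j h.2
  have hlim := ((Complex.tendsto_sub_mul_tanh_sub_div_two (ζ 0)).mul
    ((Complex.tendsto_prod_tanh_mul_tanh_add_pi_mul_I _ _ hcosh₀ hcosh₁).mono_left
      nhdsWithin_le_nhds)).mul_const
    (∏ p ∈ Finset.univ.filter (fun p : Fin n × Fin n => p.1 < p.2),
      Complex.tanh ((ζ p.1.succ.succ - ζ p.2.succ.succ) / 2))
  rw [mul_one] at hlim
  refine hlim.congr fun w => ?_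
  rw [prod_pairs_lt_fin_succ_succ
    (fun i j => Complex.tanh ((Function.update ζ 1 w i - Function.update ζ 1 w j) / 2))]
  simp only [ne_eq, zero_ne_one, not_false_eq_true, Function.update_of_ne, Function.update_self,
    Fin.succ_succ_ne_one]
  ring
end

section
/- For ζ in the tube ℝⁿ + i·I⁺ₙ, where I⁺ₙ = {λ ∈ ℝⁿ : 0 < λ₁ < … < λₙ < π}, there is a constant c (depending only on n) such that |M_n(ζ)| ≤ c · dist(Im ζ, ∂I⁺ₙ)^{-⌊n/2⌋}. -/
/-!
For `a < b` the factor `tanh((ζ_a - ζ_b)/2)` is at most `1 + π/β` in modulus, where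
`β = |ζ_a - ζ_b + iπ|` is the distance to its pole, and `β ≥ Im (ζ_a - ζ_b) + π ≥ 2d` with
`d = dist(Im ζ, ∂I⁺ₙ)`. Poles cannot pile up: let `i < j` be the pair closest to its pole. For any
other index `a`, one of the two factors joining `a` to `i` and `j` stays away from its pole (the
imaginary parts lie in an interval of length `< π`), and if the other one is near its pole, the
triangle inequality through `ζ_i - ζ_j + iπ` puts the first one near its zero, where
`|tanh(w/2)| ≤ 2|w|`. So the factors joining `a` to `{i, j}` have bounded product, the factor of
`(i, j)` is `O(1/d)`, and removing `i, j` and inducting gives `O(d^{-⌊n/2⌋})`.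
-/

open Finset Metric

/-- The open simplex `I⁺ₙ = {λ : 0 < λ₁ < … < λₙ < π}`, as a subset of
Euclidean space. -/
def simplexIplus (n : ℕ) : Set (EuclideanSpace ℝ (Fin n)) :=
  {l | StrictMono l ∧ ∀ i, l i ∈ Set.Ioo 0 Real.pi}

open Complex
open scoped Real

lemma norm_sinh_add_mul_I_sq (x y : ℝ) :
    ‖sinh (x + y * I)‖ ^ 2 = Real.sinh x ^ 2 + Real.sin y ^ 2 := by
  rw [sinh_add, sinh_mul_I, cosh_mul_I, ← ofReal_sinh, ← ofReal_cosh, ← ofReal_sin,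
    ← ofReal_cos, Complex.sq_norm, normSq_apply]
  simp only [add_re, mul_re, ofReal_re, ofReal_im, I_re, I_im, add_im, mul_im]
  nlinarith [Real.cosh_sq x, Real.sin_sq_add_cos_sq y]

lemma norm_le_pi_div_two_mul_norm_sinh {u : ℂ} (h0 : 0 ≤ u.im) (h1 : u.im ≤ π / 2) :
    ‖u‖ ≤ π / 2 * ‖sinh u‖ := by
  obtain ⟨x, y, rfl⟩ : ∃ x y : ℝ, u = x + y * I := ⟨u.re, u.im, (re_add_im u).symm⟩
  simp only [add_im, ofReal_im, mul_im, ofReal_re, I_im, mul_one, I_re, mul_zero, zero_add,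
    add_zero] at h0 h1
  have hsin : y ^ 2 ≤ (π / 2) ^ 2 * Real.sin y ^ 2 := by
    rw [← mul_pow]
    refine pow_le_pow_left₀ h0 ?_ 2
    calc y = π / 2 * (2 / π * y) := by field_simp
      _ ≤ π / 2 * Real.sin y := by gcongr; exact Real.mul_le_sin h0 h1
  have hsinh : x ^ 2 ≤ Real.sinh x ^ 2 := by
    rw [← sq_abs, ← sq_abs (Real.sinh x), Real.abs_sinh]
    exact pow_le_pow_left₀ (abs_nonneg x) (Real.self_le_sinh_iff.2 (abs_nonneg x)) 2
  have hpi : 1 ≤ (π / 2) ^ 2 := one_le_pow₀ (by linarith [Real.pi_gt_three])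
  refine (pow_le_pow_iff_left₀ (norm_nonneg _) (by positivity) two_ne_zero).1 ?_
  rw [mul_pow, norm_sinh_add_mul_I_sq, Complex.sq_norm, normSq_add_mul_I]
  nlinarith [sq_nonneg (Real.sinh x)]

lemma norm_cosh_le_norm_sinh_add_one (u : ℂ) : ‖cosh u‖ ≤ ‖sinh u‖ + 1 := by
  refine (pow_le_pow_iff_left₀ (norm_nonneg _) (by positivity) two_ne_zero).1 ?_
  calc ‖cosh u‖ ^ 2 = ‖sinh u ^ 2 + 1‖ := by rw [← cosh_sq, norm_pow]
    _ ≤ ‖sinh u‖ ^ 2 + 1 := (norm_add_le _ _).trans (by rw [norm_pow, norm_one])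
    _ ≤ (‖sinh u‖ + 1) ^ 2 := by nlinarith [norm_nonneg (sinh u)]

lemma tanh_sub_pi_div_two_mul_I (u : ℂ) :
    tanh (u - π / 2 * I) = cosh u / sinh u := by
  have hcos : cos (π / 2 : ℂ) = 0 := by exact_mod_cast Real.cos_pi_div_two
  have hsin : sin (π / 2 : ℂ) = 1 := by exact_mod_cast Real.sin_pi_div_two
  rw [tanh_eq_sinh_div_cosh, sinh_sub, cosh_sub, sinh_mul_I, cosh_mul_I, hcos, hsin]
  rw [show sinh u * 0 - cosh u * (1 * I) = cosh u * -I by ring,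
    show cosh u * 0 - sinh u * (1 * I) = sinh u * -I by ring,
    mul_div_mul_right _ _ (neg_ne_zero.2 I_ne_zero)]

lemma norm_tanh_half_le (w : ℂ) (h0 : -π < w.im) (h1 : w.im ≤ 0) :
    ‖tanh (w / 2)‖ ≤ 1 + π / ‖w + π * I‖ := by
  set u := (w + π * I) / 2
  have hu_im : u.im = (w.im + π) / 2 := by simp [u]
  have hu : ‖u‖ ≤ π / 2 * ‖sinh u‖ :=
    norm_le_pi_div_two_mul_norm_sinh (by rw [hu_im]; linarith) (by rw [hu_im]; linarith)
  have hu0 : 0 < ‖u‖ := by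
    refine norm_pos_iff.2 fun h => ?_
    have := congrArg im h
    simp only [hu_im, zero_im] at this
    linarith
  have hs0 : 0 < ‖sinh u‖ := by nlinarith [Real.pi_pos]
  rw [show w / 2 = u - π / 2 * I by simp only [u]; ring, tanh_sub_pi_div_two_mul_I, norm_div,
    div_le_iff₀ hs0]
  have hnorm : ‖w + π * I‖ = 2 * ‖u‖ := by simp only [u, norm_div, Complex.norm_two]; ring
  have : 1 ≤ π / ‖w + π * I‖ * ‖sinh u‖ := by
    rw [hnorm, div_mul_eq_mul_div, le_div_iff₀ (by positivity)]; linarith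
  nlinarith [norm_cosh_le_norm_sinh_add_one u]

lemma tanh_half_eq_exp (z : ℂ) : tanh (z / 2) = (exp z - 1) / (exp z + 1) := by
  rw [tanh_eq_sinh_div_cosh, sinh, cosh, div_div_div_cancel_right₀ two_ne_zero,
    ← mul_div_mul_right _ _ (exp_ne_zero (z / 2)), sub_mul, add_mul, ← exp_add, ← exp_add,
    add_halves, neg_add_cancel, exp_zero]

lemma norm_tanh_half_le_two_mul (z : ℂ) (hz : ‖z‖ ≤ 1 / 2) : ‖tanh (z / 2)‖ ≤ 2 * ‖z‖ := by
  have hnum : ‖exp z - 1‖ ≤ 2 * ‖z‖ := norm_exp_sub_one_le (by linarith)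
  have hden : 1 ≤ ‖exp z + 1‖ := by
    have := norm_sub_norm_le (2 : ℂ) (-(exp z - 1))
    rw [show (2 : ℂ) - -(exp z - 1) = exp z + 1 by ring, norm_neg] at this
    norm_num at this
    linarith
  rw [tanh_half_eq_exp, norm_div, div_le_iff₀ (by linarith)]
  nlinarith [norm_nonneg z]

lemma norm_tanh_half_le_pi_div {w : ℂ} {δ : ℝ} (hδ : 0 < δ) (hw : w.im ≤ 0)
    (hδw : 2 * δ ≤ w.im + π) : ‖tanh (w / 2)‖ ≤ π / δ := by
  have hβ : 2 * δ ≤ ‖w + π * I‖ := hδw.trans (by simpa using im_le_norm (w + π * I))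
  refine (norm_tanh_half_le w (by linarith) hw).trans ?_
  calc 1 + π / ‖w + π * I‖ ≤ π / (2 * δ) + π / (2 * δ) := by
        gcongr
        rw [le_div_iff₀ (by positivity)]
        linarith
    _ = π / δ := by field_simp; ring

lemma norm_tanh_half_mul_le_of_compensated {w z : ℂ} (hw0 : -π < w.im) (hw1 : w.im ≤ 0)
    (hz0 : -π < z.im) (hz1 : z.im ≤ 0) (hz : π / 2 ≤ ‖z + π * I‖)
    (hzw : ‖z‖ ≤ 2 * ‖w + π * I‖) :
    ‖tanh (w / 2)‖ * ‖tanh (z / 2)‖ ≤ 42 := by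
  have hpi := Real.pi_lt_d2
  have hTw := norm_tanh_half_le w hw0 hw1
  have hTz : ‖tanh (z / 2)‖ ≤ 3 := by
    refine (norm_tanh_half_le z hz0 hz1).trans ?_
    rw [add_comm, ← le_sub_iff_add_le, div_le_iff₀ (by linarith)]
    linarith
  set β := ‖w + π * I‖
  rcases le_or_gt (1 / 4) β with hβ | hβ
  · have : ‖tanh (w / 2)‖ ≤ 14 := by
      refine hTw.trans ?_
      rw [add_comm, ← le_sub_iff_add_le, div_le_iff₀ (by linarith)]
      linarith
    nlinarith [norm_nonneg (tanh (w / 2)), norm_nonneg (tanh (z / 2))]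
  · have hβ0 : 0 < β := (by simp; linarith : 0 < (w + π * I).im).trans_le (im_le_norm _)
    have hTz' : ‖tanh (z / 2)‖ ≤ 4 * β :=
      (norm_tanh_half_le_two_mul z (by linarith)).trans (by linarith)
    calc ‖tanh (w / 2)‖ * ‖tanh (z / 2)‖ ≤ (1 + π / β) * (4 * β) :=
          mul_le_mul hTw hTz' (norm_nonneg _) (by positivity)
      _ = 4 * β + 4 * π := by field_simp
      _ ≤ 42 := by linarith

section Factors

variable {ι : Type*} (ζ : ι → ℂ)

noncomputable def tanhFactor (a b : ι) : ℝ := ‖tanh ((ζ a - ζ b) / 2)‖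

noncomputable def poleDist (a b : ι) : ℝ := ‖ζ a - ζ b + π * I‖

lemma tanhFactor_comm (a b : ι) : tanhFactor ζ a b = tanhFactor ζ b a := by
  rw [tanhFactor, tanhFactor, ← neg_sub, neg_div, tanh_neg, norm_neg]

lemma norm_sub_le_poleDist_add_left (x y z : ι) :
    ‖ζ x - ζ y‖ ≤ poleDist ζ x z + poleDist ζ y z := by
  unfold poleDist
  simpa using norm_sub_le (ζ x - ζ z + π * I) (ζ y - ζ z + π * I)

lemma norm_sub_le_poleDist_add_right (x y z : ι) :
    ‖ζ y - ζ z‖ ≤ poleDist ζ x y + poleDist ζ x z := by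
  unfold poleDist
  rw [add_comm]
  simpa using norm_sub_le (ζ x - ζ z + π * I) (ζ x - ζ y + π * I)

lemma pi_lt_poleDist_add {x y z : ι} (h : (ζ z).im < (ζ x).im + π) :
    π < poleDist ζ x y + poleDist ζ y z := by
  have h₁ := im_le_norm (ζ x - ζ y + π * I)
  have h₂ := im_le_norm (ζ y - ζ z + π * I)
  simp only [add_im, sub_im, mul_im, ofReal_re, I_im, ofReal_im, I_re] at h₁ h₂
  unfold poleDist
  linarith

end Factors

section Ordered

variable {ι : Type*} [LinearOrder ι] {ζ : ι → ℂ} (hmono : StrictMono fun i => (ζ i).im)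
  (hwidth : ∀ i j, (ζ i).im < (ζ j).im + π)
include hmono hwidth

lemma im_sub_mem_Ioo {x y : ι} (hxy : x < y) : (ζ x - ζ y).im ∈ Set.Ioo (-π) 0 := by
  have := hmono hxy
  have := hwidth y x
  simp only [sub_im, Set.mem_Ioo]
  constructor <;> linarith

lemma tanhFactor_mul_le {x y x' y' : ι} (hxy : x < y) (hxy' : x' < y')
    (hpole : π / 2 ≤ poleDist ζ x' y') (hcomp : ‖ζ x' - ζ y'‖ ≤ 2 * poleDist ζ x y) :
    tanhFactor ζ x y * tanhFactor ζ x' y' ≤ 42 :=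
  have h := im_sub_mem_Ioo hmono hwidth hxy
  have h' := im_sub_mem_Ioo hmono hwidth hxy'
  norm_tanh_half_mul_le_of_compensated h.1 h.2.le h'.1 h'.2.le hpole hcomp

lemma tanhFactor_mul_le_of_poleDist_min {S : Finset ι} {i j a : ι} (hi : i ∈ S) (hj : j ∈ S)
    (ha : a ∈ S) (hij : i < j) (hai : a ≠ i) (haj : a ≠ j)
    (hmin : ∀ x ∈ S, ∀ y ∈ S, x < y → poleDist ζ i j ≤ poleDist ζ x y) :
    tanhFactor ζ a i * tanhFactor ζ a j ≤ 42 := by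
  have hsum {x y z : ι} : π < poleDist ζ x y + poleDist ζ y z :=
    pi_lt_poleDist_add ζ (hwidth z x)
  rcases lt_or_gt_of_ne hai with hai' | hia
  · have := hmin a ha i hi hai'
    have := hmin a ha j hj (hai'.trans hij)
    rw [mul_comm]
    refine tanhFactor_mul_le hmono hwidth (hai'.trans hij) hai' (by linarith [@hsum a i j]) ?_
    linarith [norm_sub_le_poleDist_add_left ζ a i j]
  rcases lt_or_gt_of_ne haj with haj' | hja
  · have := hmin i hi a ha hia
    have := hmin a ha j hj haj'
    rw [tanhFactor_comm ζ a i]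
    rcases le_total (π / 2) (poleDist ζ i a) with hpole | hpole
    · rw [mul_comm]
      refine tanhFactor_mul_le hmono hwidth haj' hia hpole ?_
      linarith [norm_sub_le_poleDist_add_left ζ i a j]
    · refine tanhFactor_mul_le hmono hwidth hia haj' (by linarith [@hsum i a j]) ?_
      linarith [norm_sub_le_poleDist_add_right ζ i a j]
  · have := hmin j hj a ha hja
    have := hmin i hi a ha (hij.trans hja)
    rw [tanhFactor_comm ζ a i, tanhFactor_comm ζ a j]
    refine tanhFactor_mul_le hmono hwidth (hij.trans hja) hja (by linarith [@hsum i j a]) ?_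
    linarith [norm_sub_le_poleDist_add_right ζ i j a]

lemma exists_pair_tanhFactor_mul_le {S : Finset ι} (hS : 2 ≤ S.card) :
    ∃ i ∈ S, ∃ j ∈ S, i < j ∧
      ∀ a ∈ S, a ≠ i → a ≠ j → tanhFactor ζ a i * tanhFactor ζ a j ≤ 42 := by
  have hne : ((S ×ˢ S).filter fun p => p.1 < p.2).Nonempty := by
    obtain ⟨x, hx, y, hy, hxy⟩ := one_lt_card.1 hS
    rcases lt_or_gt_of_ne hxy with h | h
    · exact ⟨(x, y), by simp [hx, hy, h]⟩
    · exact ⟨(y, x), by simp [hx, hy, h]⟩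
  obtain ⟨⟨i, j⟩, hp, hmin⟩ := exists_min_image _ (fun p => poleDist ζ p.1 p.2) hne
  simp only [mem_filter, mem_product] at hp
  exact ⟨i, hp.1.1, j, hp.1.2, hp.2, fun a ha hai haj =>
    tanhFactor_mul_le_of_poleDist_min hmono hwidth hp.1.1 hp.1.2 ha hp.2 hai haj
      fun x hx y hy hxy => hmin (x, y) (by simp [hx, hy, hxy])⟩

end Ordered

section Peeling

variable {ι : Type*} [LinearOrder ι]

lemma prod_filter_lt_insert {M : Type*} [CommMonoid M] {g : ι → ι → M}
    (hg : ∀ a b, g a b = g b a) {i : ι} {S : Finset ι} (hi : i ∉ S) :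
    ∏ p ∈ (insert i S ×ˢ insert i S).filter (fun p => p.1 < p.2), g p.1 p.2 =
      (∏ b ∈ S, g i b) * ∏ p ∈ (S ×ˢ S).filter (fun p => p.1 < p.2), g p.1 p.2 := by
  simp only [prod_filter, prod_product, prod_insert hi, lt_irrefl, if_false, one_mul,
    prod_mul_distrib]
  rw [← mul_assoc, ← prod_mul_distrib]
  congr 1
  refine prod_congr rfl fun b hb => ?_
  rcases lt_or_gt_of_ne (ne_of_mem_of_not_mem hb hi) with h | h
  · simp [h, h.not_gt, hg b i]
  · simp [h, h.not_gt]

lemma prod_filter_lt_le_of_exists_pair {g : ι → ι → ℝ} (hg0 : ∀ a b, 0 ≤ g a b)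
    (hg : ∀ a b, g a b = g b a) {A K : ℝ} (hK : 1 ≤ K)
    (hpeel : ∀ S : Finset ι, 2 ≤ S.card → ∃ i ∈ S, ∃ j ∈ S, i ≠ j ∧ g i j ≤ A ∧
      ∀ a ∈ S, a ≠ i → a ≠ j → g a i * g a j ≤ K) (S : Finset ι) :
    ∏ p ∈ (S ×ˢ S).filter (fun p => p.1 < p.2), g p.1 p.2 ≤
      A ^ (S.card / 2) * K ^ S.card ^ 2 := by
  induction S using Finset.strongInduction with
  | H S ih =>
  rcases lt_or_ge S.card 2 with hS | hS
  · have : (S ×ˢ S).filter (fun p => p.1 < p.2) = ∅ := by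
      refine filter_eq_empty_iff.2 fun p hp hlt => hlt.ne ?_
      rw [mem_product] at hp
      exact card_le_one.1 (by omega) _ hp.1 _ hp.2
    rw [this, prod_empty, Nat.div_eq_of_lt hS, pow_zero, one_mul]
    exact one_le_pow₀ hK
  obtain ⟨i, hi, j, hj, hij, hgA, hgK⟩ := hpeel S hS
  set R := (S.erase j).erase i
  have hiR : i ∉ R := by simp [R]
  have hjR : j ∉ insert i R := by simp [R, hij.symm]
  have hSR : S = insert j (insert i R) := by
    rw [insert_erase (mem_erase.2 ⟨hij, hi⟩), insert_erase hj]
  have hcard : S.card = R.card + 2 := by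
    rw [hSR, card_insert_of_notMem hjR, card_insert_of_notMem hiR]
  have hR := ih R ((erase_subset _ _).trans_ssubset (erase_ssubset hj))
  have hA : 0 ≤ A := (hg0 j i).trans ((hg j i).trans_le hgA)
  have hRK : ∏ b ∈ R, (g j b * g i b) ≤ K ^ R.card := by
    refine (prod_le_prod (fun b _ => mul_nonneg (hg0 _ _) (hg0 _ _)) fun b hb => ?_).trans_eq
      (prod_const K)
    have hb' : b ∈ S ∧ b ≠ i ∧ b ≠ j := by simp only [R, mem_erase] at hb; tauto
    rw [hg j b, hg i b, mul_comm]
    exact hgK b hb'.1 hb'.2.1 hb'.2.2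
  rw [hSR, prod_filter_lt_insert hg hjR, prod_filter_lt_insert hg hiR, prod_insert hiR, ← hSR,
    hcard, Nat.add_div_right _ two_pos]
  calc (g j i * ∏ b ∈ R, g j b) * ((∏ b ∈ R, g i b) *
        ∏ p ∈ (R ×ˢ R).filter (fun p => p.1 < p.2), g p.1 p.2)
      = g j i * (∏ b ∈ R, (g j b * g i b)) *
        ∏ p ∈ (R ×ˢ R).filter (fun p => p.1 < p.2), g p.1 p.2 := by
        rw [prod_mul_distrib]; ring
    _ ≤ A * K ^ R.card * (A ^ (R.card / 2) * K ^ R.card ^ 2) := by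
        gcongr
        · exact prod_nonneg fun p _ => hg0 _ _
        · exact prod_nonneg fun b _ => mul_nonneg (hg0 _ _) (hg0 _ _)
        · exact (hg j i).trans_le hgA
    _ = A ^ (R.card / 2 + 1) * K ^ (R.card + R.card ^ 2) := by ring
    _ ≤ A ^ (R.card / 2 + 1) * K ^ (R.card + 2) ^ 2 := by
        gcongr
        nlinarith

end Peeling

lemma infDist_frontier_eq_infDist_compl {E : Type*} [NormedAddCommGroup E] [NormedSpace ℝ E]
    [FiniteDimensional ℝ E] {s : Set E} {x : E} (hs : IsOpen s) (hx : x ∈ s)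
    (hne : s ≠ Set.univ) : infDist x (frontier s) = infDist x sᶜ := by
  obtain ⟨y, hy, hxy⟩ := exists_mem_frontier_infDist_compl_eq_dist hx hne
  refine le_antisymm (hxy ▸ infDist_le_dist_of_mem hy) (infDist_le_infDist_of_subset ?_ ⟨y, hy⟩)
  rw [hs.frontier_eq]
  exact fun z hz => hz.2

lemma isOpen_simplexIplus (n : ℕ) : IsOpen (simplexIplus n) := by
  have hcont (i : Fin n) : Continuous fun l : EuclideanSpace ℝ (Fin n) => l i := by fun_prop
  have : simplexIplus n = (⋂ i, ⋂ j, {l | i < j → l i < l j}) ∩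
      ⋂ i, ({l | 0 < l i} ∩ {l | l i < π}) := by
    ext l
    simp [simplexIplus, StrictMono, forall_and]
  rw [this]
  refine (isOpen_iInter_of_finite fun i => isOpen_iInter_of_finite fun j => ?_).inter
    (isOpen_iInter_of_finite fun i =>
      (isOpen_lt continuous_const (hcont i)).inter (isOpen_lt (hcont i) continuous_const))
  by_cases h : i < j
  · simpa [h] using isOpen_lt (hcont i) (hcont j)
  · simp [h]

lemma simplexIplus_ne_univ {n : ℕ} (i : Fin n) : simplexIplus n ≠ Set.univ := fun h => by
  simpa using ((h ▸ Set.mem_univ 0 : (0 : EuclideanSpace ℝ (Fin n)) ∈ simplexIplus n).2 i).1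

section Simplex

variable {n : ℕ} {l : EuclideanSpace ℝ (Fin n)} (hl : l ∈ simplexIplus n)
include hl

lemma infDist_frontier_simplexIplus_pos (i : Fin n) : 0 < infDist l (frontier (simplexIplus n)) := by
  have hne := simplexIplus_ne_univ i
  rw [infDist_frontier_eq_infDist_compl (isOpen_simplexIplus n) hl hne,
    ← (isOpen_simplexIplus n).isClosed_compl.notMem_iff_infDist_pos (Set.nonempty_compl.2 hne)]
  exact not_not.2 hl

lemma infDist_frontier_simplexIplus_le_abs (i : Fin n) {t : ℝ} (ht : t ∉ Set.Ioo 0 π) :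
    infDist l (frontier (simplexIplus n)) ≤ |t - l i| := by
  set y := l + EuclideanSpace.single i (t - l i)
  have hy : y ∉ simplexIplus n := fun h => ht (by simpa [y] using h.2 i)
  rw [infDist_frontier_eq_infDist_compl (isOpen_simplexIplus n) hl (simplexIplus_ne_univ i)]
  refine (infDist_le_dist_of_mem hy).trans_eq ?_
  rw [dist_self_add_right, PiLp.norm_single, Real.norm_eq_abs]

lemma infDist_frontier_simplexIplus_le (i : Fin n) :
    infDist l (frontier (simplexIplus n)) ≤ l i ∧
      infDist l (frontier (simplexIplus n)) ≤ π - l i := by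
  have hli := hl.2 i
  constructor
  · refine (infDist_frontier_simplexIplus_le_abs hl i (t := 0) (by simp)).trans_eq ?_
    rw [zero_sub, abs_neg, abs_of_pos hli.1]
  · refine (infDist_frontier_simplexIplus_le_abs hl i (t := π) (by simp)).trans_eq ?_
    rw [abs_of_pos (sub_pos.2 hli.2)]

end Simplex

/-- On the tube `ℝⁿ + i I⁺ₙ` there is a constant `c` (depending only on `n`)
such that `|M_n(ζ)| ≤ c · dist(Im ζ, ∂I⁺ₙ)^{-⌊n/2⌋}`, where
`M_n(ζ) = ∏_{i<j} tanh((ζ_i - ζ_j)/2)` and the distance is the Euclidean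
distance from `Im ζ` to the boundary of `I⁺ₙ`. -/
theorem Modd_tube_bound (n : ℕ) :
    ∃ c > 0, ∀ ζ : Fin n → ℂ,
      (show EuclideanSpace ℝ (Fin n) from WithLp.toLp 2 fun i => (ζ i).im) ∈ simplexIplus n →
      ‖∏ p ∈ Finset.univ.filter (fun p : Fin n × Fin n => p.1 < p.2),
          Complex.tanh ((ζ p.1 - ζ p.2) / 2)‖
        ≤ c / (Metric.infDist
            (show EuclideanSpace ℝ (Fin n) from WithLp.toLp 2 fun i => (ζ i).im)
            (frontier (simplexIplus n))) ^ (n / 2) := by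
  refine ⟨π ^ (n / 2) * 42 ^ n ^ 2, by positivity, fun ζ hζ => ?_⟩
  set d := infDist (WithLp.toLp 2 fun i => (ζ i).im) (frontier (simplexIplus n))
  have hmono : StrictMono fun i => (ζ i).im := hζ.1
  have hwidth (i j : Fin n) : (ζ i).im < (ζ j).im + π := by
    linarith [(hζ.2 i).2, (hζ.2 j).1]
  have hpeel (S : Finset (Fin n)) (hS : 2 ≤ S.card) : ∃ i ∈ S, ∃ j ∈ S, i ≠ j ∧
      tanhFactor ζ i j ≤ π / d ∧ ∀ a ∈ S, a ≠ i → a ≠ j →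
        tanhFactor ζ a i * tanhFactor ζ a j ≤ 42 := by
    obtain ⟨i, hi, j, hj, hij, hK⟩ := exists_pair_tanhFactor_mul_le hmono hwidth hS
    have hd := infDist_frontier_simplexIplus_le hζ
    refine ⟨i, hi, j, hj, hij.ne, norm_tanh_half_le_pi_div
      (infDist_frontier_simplexIplus_pos hζ i) ?_ ?_, hK⟩
    · simpa using (hmono hij).le
    · have h₁ := (hd i).1
      have h₂ := (hd j).2
      simp only [sub_im]
      linarith
  have hprod := prod_filter_lt_le_of_exists_pair (fun _ _ => norm_nonneg _)
    (tanhFactor_comm ζ) (by norm_num) hpeel univ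
  rw [univ_product_univ, card_univ, Fintype.card_fin] at hprod
  rw [norm_prod]
  refine hprod.trans_eq ?_
  rw [div_pow]
  ring
end

section
/- The subalgebra Λ_I (generated by odd power sums in the exponential variables) separates points of the compact space 𝔛 = ⊔_{j=1}^n {x ∈ ℝ^j : e^{-r} ≤ x₁ ≤ … ≤ x_j ≤ e^r}: if P(x) = P(y) for all P ∈ Λ_I with x ∈ 𝔛 ∩ ℝ^i, y ∈ 𝔛 ∩ ℝ^j, then i = j and x = y. -/
/-!
If two finite multisets of positive reals have the same odd power sums and `a` is the largest
element of their union, then `a` lies in both: otherwise `a ^ (2k+1)` alone eventually exceeds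
the other power sum, whose terms are all `o(a ^ e)`. Removing one copy of `a` from each side
preserves the hypothesis, so the multisets agree by induction; two monotone tuples with the same
multiset of values are the sorted listings of it, hence equal.
-/

open Filter Asymptotics

lemma eventually_multiset_sum_pow_lt_pow {a : ℝ} (ha : 0 < a) (t : Multiset ℝ)
    (ht : ∀ z ∈ t, 0 ≤ z ∧ z < a) : ∀ᶠ e in atTop, (t.map (· ^ e)).sum < a ^ e := by
  have hlittle : (fun e : ℕ ↦ (t.map (· ^ e)).sum) =o[atTop] (a ^ ·) := by
    induction t using Multiset.induction_on with
    | empty => simp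
    | cons z t ih =>
      simp only [Multiset.map_cons, Multiset.sum_cons]
      obtain ⟨hz0, hza⟩ := ht z (Multiset.mem_cons_self z t)
      exact (isLittleO_pow_pow_of_lt_left hz0 hza).add
        (ih fun w hw ↦ ht w (Multiset.mem_cons_of_mem hw))
  filter_upwards [hlittle.def one_half_pos] with e he
  have hae : 0 < a ^ e := pow_pos ha e
  rw [Real.norm_of_nonneg hae.le] at he
  linarith [le_abs_self (t.map (· ^ e)).sum, Real.norm_eq_abs (t.map (· ^ e)).sum]

lemma Multiset.mem_of_odd_pow_sum_eq {s t : Multiset ℝ} (hs : ∀ z ∈ s, 0 < z)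
    (ht : ∀ z ∈ t, 0 < z)
    (h : ∀ k : ℕ, (s.map (· ^ (2 * k + 1))).sum = (t.map (· ^ (2 * k + 1))).sum)
    {a : ℝ} (has : a ∈ s) (hat : ∀ z ∈ t, z ≤ a) : a ∈ t := by
  by_contra hnot
  have hlt : ∀ z ∈ t, 0 ≤ z ∧ z < a := fun z hz ↦
    ⟨(ht z hz).le, (hat z hz).lt_of_ne (ne_of_mem_of_not_mem hz hnot)⟩
  have hodd : Tendsto (fun k : ℕ ↦ 2 * k + 1) atTop atTop :=
    tendsto_atTop_atTop_of_monotone (fun _ _ hkl ↦ by omega) fun b ↦ ⟨b, by omega⟩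
  obtain ⟨k, hk⟩ := (hodd.eventually (eventually_multiset_sum_pow_lt_pow (hs a has) t hlt)).exists
  have hle : a ^ (2 * k + 1) ≤ (s.map (· ^ (2 * k + 1))).sum :=
    Multiset.single_le_sum (by simpa using fun z hz ↦ (pow_pos (hs z hz) _).le) _
      (Multiset.mem_map_of_mem _ has)
  exact (hk.trans_le hle).ne (h k).symm

theorem Multiset.eq_of_odd_pow_sum_eq {s t : Multiset ℝ} (hs : ∀ z ∈ s, 0 < z)
    (ht : ∀ z ∈ t, 0 < z)
    (h : ∀ k : ℕ, (s.map (· ^ (2 * k + 1))).sum = (t.map (· ^ (2 * k + 1))).sum) : s = t := by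
  induction s using Multiset.strongInductionOn generalizing t with
  | ih s ih =>
    rcases eq_or_ne (s + t) 0 with hst | hst
    · obtain ⟨rfl, rfl⟩ := add_eq_zero.mp hst
      rfl
    obtain ⟨a, ha, hmax⟩ := Multiset.exists_max_image id hst
    have has : a ∈ s := by
      rcases Multiset.mem_add.mp ha with has | hat
      · exact has
      · exact mem_of_odd_pow_sum_eq ht hs (fun k ↦ (h k).symm) hat
          fun z hz ↦ hmax z (Multiset.mem_add.mpr (.inl hz))
    have hat : a ∈ t :=
      mem_of_odd_pow_sum_eq hs ht h has fun z hz ↦ hmax z (Multiset.mem_add.mpr (.inr hz))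
    obtain ⟨s', rfl⟩ := Multiset.exists_cons_of_mem has
    obtain ⟨t', rfl⟩ := Multiset.exists_cons_of_mem hat
    congr 1
    refine ih s' (Multiset.lt_cons_self s' a) (fun z hz ↦ hs z (Multiset.mem_cons_of_mem hz))
      (fun z hz ↦ ht z (Multiset.mem_cons_of_mem hz)) fun k ↦ ?_
    simpa only [Multiset.map_cons, Multiset.sum_cons, add_right_inj] using h k

lemma Monotone.exists_eq_comp_cast_of_ofFn_perm {α : Type*} [PartialOrder α] {i j : ℕ}
    {x : Fin i → α} {y : Fin j → α} (hx : Monotone x) (hy : Monotone y)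
    (hxy : (List.ofFn x).Perm (List.ofFn y)) : ∃ h : i = j, x = y ∘ Fin.cast h :=
  Fin.sigma_eq_iff_eq_comp_cast.mp <| List.ofFn_inj'.mp <|
    hxy.eq_of_sortedLE (List.sortedLE_ofFn_iff.mpr hx) (List.sortedLE_ofFn_iff.mpr hy)

theorem odd_power_sums_separate_points_general (r : ℝ)
    (i j : ℕ)
    (x : Fin i → ℝ) (y : Fin j → ℝ)
    (hxmono : Monotone x) (hymono : Monotone y)
    (hxmem : ∀ m, x m ∈ Set.Icc (Real.exp (-r)) (Real.exp r))
    (hymem : ∀ m, y m ∈ Set.Icc (Real.exp (-r)) (Real.exp r))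
    (hsep : ∀ k : ℕ, ∑ m, x m ^ (2 * k + 1) = ∑ m, y m ^ (2 * k + 1)) :
    ∃ h : i = j, ∀ m : Fin i, x m = y (Fin.cast h m) := by
  have hpos : ∀ {d : ℕ} (z : Fin d → ℝ), (∀ m, z m ∈ Set.Icc (Real.exp (-r)) (Real.exp r)) →
      ∀ w ∈ (List.ofFn z : Multiset ℝ), 0 < w := by
    intro d z hz w hw
    obtain ⟨m, rfl⟩ := List.mem_ofFn.mp (Multiset.mem_coe.mp hw)
    exact (Real.exp_pos _).trans_le (hz m).1
  have hperm : (List.ofFn x).Perm (List.ofFn y) :=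
    Multiset.coe_eq_coe.mp <| Multiset.eq_of_odd_pow_sum_eq (hpos x hxmem) (hpos y hymem)
      fun k ↦ by simpa only [Multiset.map_coe, Multiset.sum_coe, List.map_ofFn, List.sum_ofFn,
          Function.comp_apply]
        using hsep k
  obtain ⟨hij, hxy⟩ := hxmono.exists_eq_comp_cast_of_ofFn_perm hymono hperm
  exact ⟨hij, congrFun hxy⟩

/-- The algebra `Λ_I` generated by the odd power sums separates the points of
the compact space `𝔛 = ⊔_{j=1}^n {x ∈ ℝ^j : e^{-r} ≤ x₁ ≤ … ≤ x_j ≤ e^r}`: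
since `Λ_I` is generated by the odd power sums `p_{2k+1}`, two points
`x ∈ 𝔛 ∩ ℝ^i`, `y ∈ 𝔛 ∩ ℝ^j` on which all elements of `Λ_I` (equivalently,
all the generators `p_{2k+1}`) take the same value satisfy `i = j` and
`x = y`. -/
theorem odd_power_sums_separate_points (n : ℕ) (r : ℝ) (hr : 0 < r)
    (i j : ℕ) (hi1 : 1 ≤ i) (hin : i ≤ n) (hj1 : 1 ≤ j) (hjn : j ≤ n)
    (x : Fin i → ℝ) (y : Fin j → ℝ)
    (hxmono : Monotone x) (hymono : Monotone y)
    (hxmem : ∀ m, x m ∈ Set.Icc (Real.exp (-r)) (Real.exp r))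
    (hymem : ∀ m, y m ∈ Set.Icc (Real.exp (-r)) (Real.exp r))
    (hsep : ∀ k : ℕ, ∑ m, x m ^ (2 * k + 1) = ∑ m, y m ^ (2 * k + 1)) :
    ∃ h : i = j, ∀ m : Fin i, x m = y (Fin.cast h m) :=
  odd_power_sums_separate_points_general r i j x y hxmono hymono hxmem hymem hsep
end

section
/- Given continuous symmetric functions f_j : ℝ^j → ℂ for j = 1,…,n, and r, ε > 0, there exists a polynomial P in the odd power sums such that |P(e^{θ₁}, …, e^{θ_j}) − f_j(θ)| < ε for every j ≤ n and every θ ∈ [−r, r]^j. -/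
/-!
Sorting makes symmetric functions of `θ ∈ [-r, r]^j` into functions on the compact set of
monotone tuples, and the disjoint union of these sets over `j ≤ n` is again compact. On it the
functions `θ ↦ ∑ₘ exp(θₘ)^(2k+1)` separate points: a multiset of positive reals is determined
by its odd power sums, since the largest element dominates them as `k → ∞` and can be peeled
off. These generators are real-valued, so the complex Stone–Weierstrass theorem makes the
polynomials in them dense.
-/

open Finset MvPolynomial

def oddPowerSum (S : Multiset ℝ) (k : ℕ) : ℝ := (S.map (· ^ (2 * k + 1))).sum

@[simp]
lemma oddPowerSum_cons (a : ℝ) (S : Multiset ℝ) (k : ℕ) :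
    oddPowerSum (a ::ₘ S) k = a ^ (2 * k + 1) + oddPowerSum S k := by
  simp [oddPowerSum]

lemma oddPowerSum_map_val {ι : Type*} (s : Finset ι) (f : ι → ℝ) (k : ℕ) :
    oddPowerSum (s.val.map f) k = ∑ i ∈ s, f i ^ (2 * k + 1) := by
  simp only [oddPowerSum, Multiset.map_map, Function.comp_def]
  rfl

open Filter Topology in
lemma tendsto_oddPowerSum_div_pow {T : Multiset ℝ} {M : ℝ} (hT : ∀ x ∈ T, 0 ≤ x ∧ x < M) :
    Tendsto (fun k => oddPowerSum T k / M ^ (2 * k + 1)) atTop (𝓝 0) := by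
  have hodd : Tendsto (fun k : ℕ => 2 * k + 1) atTop atTop :=
    tendsto_atTop_mono (fun k => show k ≤ 2 * k + 1 by omega) tendsto_id
  simp_rw [oddPowerSum, ← Multiset.sum_map_div, ← div_pow]
  simpa using tendsto_multiset_sum T fun x hx =>
    have hM : 0 < M := (hT x hx).1.trans_lt (hT x hx).2
    (tendsto_pow_atTop_nhds_zero_of_lt_one (div_nonneg (hT x hx).1 hM.le)
      ((div_lt_one hM).2 (hT x hx).2)).comp hodd

lemma mem_of_oddPowerSum_eq {S T : Multiset ℝ} (hS : ∀ x ∈ S, 0 ≤ x) (hT : ∀ x ∈ T, 0 ≤ x)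
    (h : oddPowerSum S = oddPowerSum T) {M : ℝ} (hMS : M ∈ S) (hM : 0 < M)
    (hTM : ∀ x ∈ T, x ≤ M) : M ∈ T := by
  by_contra hMT
  have hlt : ∀ x ∈ T, 0 ≤ x ∧ x < M := fun x hx =>
    ⟨hT x hx, (hTM x hx).lt_of_ne fun hxM => hMT (hxM ▸ hx)⟩
  obtain ⟨k, hk⟩ := ((tendsto_oddPowerSum_div_pow hlt).eventually_lt_const one_pos).exists
  have hpow : M ^ (2 * k + 1) ≤ oddPowerSum S k :=
    Multiset.single_le_sum (fun y hy => by
      obtain ⟨x, hx, rfl⟩ := Multiset.mem_map.mp hy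
      exact pow_nonneg (hS x hx) _) _ (Multiset.mem_map_of_mem _ hMS)
  rw [← h, div_lt_one (pow_pos hM _)] at hk
  exact hk.not_ge hpow

theorem eq_of_oddPowerSum_eq {S T : Multiset ℝ} (hS : ∀ x ∈ S, 0 < x) (hT : ∀ x ∈ T, 0 < x)
    (h : oddPowerSum S = oddPowerSum T) : S = T := by
  induction hN : Multiset.card (S + T) using Nat.strong_induction_on generalizing S T with
  | _ N ih =>
  rcases eq_or_ne (S + T) 0 with hST | hST
  · simp_all
  obtain ⟨M, hM, hMmax⟩ := Multiset.exists_max_image id hST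
  have hM0 : 0 < M := (Multiset.mem_add.mp hM).elim (hS M) (hT M)
  have hT_le : ∀ x ∈ T, x ≤ M := fun x hx => hMmax x (Multiset.mem_add.mpr (.inr hx))
  have hS_le : ∀ x ∈ S, x ≤ M := fun x hx => hMmax x (Multiset.mem_add.mpr (.inl hx))
  have hS' : ∀ x ∈ S, 0 ≤ x := fun x hx => (hS x hx).le
  have hT' : ∀ x ∈ T, 0 ≤ x := fun x hx => (hT x hx).le
  have hMinS : M ∈ S := (Multiset.mem_add.mp hM).elim id fun hMinT =>
    mem_of_oddPowerSum_eq hT' hS' h.symm hMinT hM0 hS_le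
  have hMinT : M ∈ T := mem_of_oddPowerSum_eq hS' hT' h hMinS hM0 hT_le
  rw [← Multiset.cons_erase hMinS, ← Multiset.cons_erase hMinT] at h hN ⊢
  congr 1
  refine ih _ ?_ (fun x hx => hS x (Multiset.mem_of_mem_erase hx))
    (fun x hx => hT x (Multiset.mem_of_mem_erase hx)) ?_ rfl
  · rw [← hN]; simp
  · funext k
    simpa using congrFun h k

lemma Monotone.eq_of_map_univ_eq {α : Type*} [LinearOrder α] {j : ℕ} {θ θ' : Fin j → α}
    (hθ : Monotone θ) (hθ' : Monotone θ') (h : univ.val.map θ = univ.val.map θ') : θ = θ' := by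
  rw [Fin.univ_val_map, Fin.univ_val_map, Multiset.coe_eq_coe] at h
  exact List.ofFn_injective (h.eq_of_sortedLE hθ.sortedLE_ofFn hθ'.sortedLE_ofFn)

theorem ContinuousMap.exists_aeval_norm_sub_lt {𝕜 X ι : Type*} [RCLike 𝕜] [TopologicalSpace X]
    [CompactSpace X] (g : ι → C(X, 𝕜)) (hg : ∀ i, IsSelfAdjoint (g i))
    (hsep : ∀ x y, (∀ i, g i x = g i y) → x = y) (F : C(X, 𝕜)) {ε : ℝ} (hε : 0 < ε) :
    ∃ P : MvPolynomial ι 𝕜, ‖aeval g P - F‖ < ε := by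
  have hstar : star (Set.range g) = Set.range g := by
    ext f
    simp only [Set.mem_star, Set.mem_range]
    constructor <;> rintro ⟨i, hi⟩
    · exact ⟨i, by rw [← star_star f, ← hi, (hg i).star_eq]⟩
    · exact ⟨i, by rw [← hi, (hg i).star_eq]⟩
  set A := StarAlgebra.adjoin 𝕜 (Set.range g)
  have hA : A.toSubalgebra = Algebra.adjoin 𝕜 (Set.range g) := by
    rw [StarAlgebra.adjoin_toSubalgebra, hstar, Set.union_self]
  have hAsep : A.SeparatesPoints := fun x y hxy => by
    obtain ⟨i, hi⟩ : ∃ i, g i x ≠ g i y := by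
      by_contra! h
      exact hxy (hsep x y h)
    exact ⟨g i, ⟨g i, StarAlgebra.subset_adjoin 𝕜 _ ⟨i, rfl⟩, rfl⟩, hi⟩
  have hF : F ∈ closure (A : Set C(X, 𝕜)) := by
    change F ∈ A.topologicalClosure
    simp [ContinuousMap.starSubalgebra_topologicalClosure_eq_top_of_separatesPoints A hAsep]
  obtain ⟨b, hbA, hb⟩ := Metric.mem_closure_iff.mp hF ε hε
  have hb' : b ∈ Algebra.adjoin 𝕜 (Set.range g) := hA ▸ hbA
  rw [Algebra.adjoin_range_eq_range_aeval] at hb'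
  obtain ⟨P, rfl⟩ := hb'
  exact ⟨P, by rwa [dist_comm, dist_eq_norm] at hb⟩

lemma MvPolynomial.aeval_continuousMap_apply {𝕜 X ι : Type*} [CommSemiring 𝕜]
    [TopologicalSpace 𝕜] [IsTopologicalSemiring 𝕜] [TopologicalSpace X]
    (g : ι → C(X, 𝕜)) (P : MvPolynomial ι 𝕜) (x : X) :
    aeval g P x = MvPolynomial.eval (fun i => g i x) P := by
  simpa using MvPolynomial.comp_aeval_apply (ContinuousMap.evalAlgHom 𝕜 𝕜 x) (f := g) P


def sortedCube (j : ℕ) (r : ℝ) : Set (Fin j → ℝ) :=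
  {θ | Monotone θ} ∩ Set.univ.pi fun _ => Set.Icc (-r) r

lemma isCompact_sortedCube (j : ℕ) (r : ℝ) : IsCompact (sortedCube j r) :=
  (isCompact_univ_pi fun _ => isCompact_Icc).inter_left isClosed_monotone

abbrev SortedCubes (n : ℕ) (r : ℝ) := Σ j : Fin (n + 1), sortedCube j r

instance (n : ℕ) (r : ℝ) : CompactSpace (SortedCubes n r) :=
  have (j : Fin (n + 1)) : CompactSpace (sortedCube j r) :=
    isCompact_iff_compactSpace.mp (isCompact_sortedCube j r)
  inferInstance

noncomputable def expOddPowerSum (n : ℕ) (r : ℝ) (k : ℕ) : C(SortedCubes n r, ℂ) where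
  toFun x := ((∑ m, Real.exp (x.2.1 m) ^ (2 * k + 1) : ℝ) : ℂ)
  continuous_toFun := continuous_sigma fun j =>
    (by fun_prop : Continuous fun θ : Fin j → ℝ =>
      ((∑ m, Real.exp (θ m) ^ (2 * k + 1) : ℝ) : ℂ)).comp continuous_subtype_val

lemma isSelfAdjoint_expOddPowerSum (n : ℕ) (r : ℝ) (k : ℕ) :
    IsSelfAdjoint (expOddPowerSum n r k) := by
  ext x
  simp only [ContinuousMap.star_apply, expOddPowerSum, ContinuousMap.coe_mk]
  exact Complex.conj_ofReal _

lemma eq_of_expOddPowerSum_eq {n : ℕ} {r : ℝ} (x y : SortedCubes n r)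
    (h : ∀ k, expOddPowerSum n r k x = expOddPowerSum n r k y) : x = y := by
  obtain ⟨j, θ, hθ⟩ := x
  obtain ⟨j', θ', hθ'⟩ := y
  have hexp : univ.val.map (Real.exp ∘ θ) = univ.val.map (Real.exp ∘ θ') := by
    refine eq_of_oddPowerSum_eq (by simp [Real.exp_pos]) (by simp [Real.exp_pos])
      (funext fun k => ?_)
    rw [oddPowerSum_map_val, oddPowerSum_map_val]
    have hk := h k
    simp only [expOddPowerSum, ContinuousMap.coe_mk, Function.comp_apply] at hk ⊢
    exact_mod_cast hk
  obtain rfl : j = j' := Fin.ext (by simpa using congrArg Multiset.card hexp)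
  rw [← Multiset.map_map, ← Multiset.map_map] at hexp
  obtain rfl := hθ.1.eq_of_map_univ_eq hθ'.1 (Multiset.map_injective Real.exp_injective hexp)
  rfl

theorem approx_by_odd_power_sums_general (n : ℕ)
    (f : (j : ℕ) → (Fin j → ℝ) → ℂ)
    (hcont : ∀ j, Continuous (f j))
    (hsymm : ∀ (j : ℕ) (τ : Equiv.Perm (Fin j)) (θ : Fin j → ℝ), f j (θ ∘ τ) = f j θ)
    (r ε : ℝ) (hε : 0 < ε) :
    ∃ P : MvPolynomial ℕ ℂ, ∀ j : ℕ, 1 ≤ j → j ≤ n → ∀ θ : Fin j → ℝ,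
      (∀ m, θ m ∈ Set.Icc (-r) r) →
      ‖MvPolynomial.eval
          (fun k : ℕ => ((∑ m : Fin j, Real.exp (θ m) ^ (2 * k + 1) : ℝ) : ℂ)) P
        - f j θ‖ < ε := by
  let F : C(SortedCubes n r, ℂ) :=
    ⟨fun x => f x.1 x.2, continuous_sigma fun j => (hcont j).comp continuous_subtype_val⟩
  obtain ⟨P, hP⟩ := ContinuousMap.exists_aeval_norm_sub_lt (expOddPowerSum n r)
    (isSelfAdjoint_expOddPowerSum n r) eq_of_expOddPowerSum_eq F hε
  refine ⟨P, fun j _ hjn θ hθ => ?_⟩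
  let x : SortedCubes n r :=
    ⟨⟨j, Nat.lt_succ_of_le hjn⟩, θ ∘ Tuple.sort θ, Tuple.monotone_sort θ, fun m _ => hθ _⟩
  have hg : (fun k => expOddPowerSum n r k x) =
      fun k => ((∑ m, Real.exp (θ m) ^ (2 * k + 1) : ℝ) : ℂ) := by
    funext k
    simp only [expOddPowerSum, ContinuousMap.coe_mk, x, Function.comp_apply]
    rw [Equiv.sum_comp (Tuple.sort θ) fun m => Real.exp (θ m) ^ (2 * k + 1)]
  have hF : F x = f j θ := hsymm j _ θ
  calc _ = ‖(aeval (expOddPowerSum n r) P - F) x‖ := by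
        rw [ContinuousMap.sub_apply, MvPolynomial.aeval_continuousMap_apply, hg, hF]
    _ ≤ ‖aeval (expOddPowerSum n r) P - F‖ := ContinuousMap.norm_coe_le_norm _ _
    _ < ε := hP

/-- Simultaneous Stone–Weierstrass approximation by polynomials in the odd
power sums: given continuous symmetric functions `f j : ℝ^j → ℂ` for
`j = 1,…,n`, and `r, ε > 0`, there is a polynomial `P` in the odd power sums
(encoded as a polynomial in variables `X k` standing for `p_{2k+1}`) such that
`|P(e^{θ₁},…,e^{θ_j}) − f j θ| < ε` for every `1 ≤ j ≤ n` and every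
`θ ∈ [−r, r]^j`. -/
theorem approx_by_odd_power_sums (n : ℕ)
    (f : (j : ℕ) → (Fin j → ℝ) → ℂ)
    (hcont : ∀ j, Continuous (f j))
    (hsymm : ∀ (j : ℕ) (τ : Equiv.Perm (Fin j)) (θ : Fin j → ℝ), f j (θ ∘ τ) = f j θ)
    (r ε : ℝ) (hr : 0 < r) (hε : 0 < ε) :
    ∃ P : MvPolynomial ℕ ℂ, ∀ j : ℕ, 1 ≤ j → j ≤ n → ∀ θ : Fin j → ℝ,
      (∀ m, θ m ∈ Set.Icc (-r) r) →
      ‖MvPolynomial.eval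
          (fun k : ℕ => ((∑ m : Fin j, Real.exp (θ m) ^ (2 * k + 1) : ℝ) : ℂ)) P
        - f j θ‖ < ε :=
  approx_by_odd_power_sums_general n f hcont hsymm r ε hε
end

section
/- For any symmetric Laurent polynomial P (a polynomial in the power sums p_k, k ∈ ℤ∖{0}), there exist constants a, b > 0 such that for all n, all ζ ∈ ℂⁿ, and all subsets J ⊆ {1,…,n}: |∂_J P(e^{ζ})| ≤ aⁿ · E(Re ζ)^b, where ∂_J denotes the mixed first partial derivative ∏_{j∈J} ∂/∂ζ_j and E(θ) = Σ_{j=1}^n cosh θ_j. -/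
open Finset

/-- The mixed first-order partial derivative `∂_J f` of a function
`f : ℂⁿ → ℂ`, for a (duplicate-free) list `J` of coordinate indices. -/
noncomputable def mixedPartial {n : ℕ} : List (Fin n) → ((Fin n → ℂ) → ℂ) → ((Fin n → ℂ) → ℂ)
  | [], f => f
  | (i :: l), f => fun ζ =>
      deriv (fun t : ℂ => mixedPartial l f (Function.update ζ i t)) (ζ i)

/-- A symmetric Laurent polynomial `P ∈ Λ^±` is a polynomial in the power sums
`p_k`, `k ∈ ℤ∖{0}`; we encode it as a polynomial in variables indexed by
`{k : ℤ // k ≠ 0}`, the variable `k` standing for `p_k`, so that evaluation on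
`e^ζ = (e^{ζ₁},…,e^{ζₙ})` substitutes `p_k ↦ Σ_j e^{k ζ_j}`. -/
noncomputable def evalLaurent (P : MvPolynomial {k : ℤ // k ≠ 0} ℂ) {n : ℕ}
    (ζ : Fin n → ℂ) : ℂ :=
  MvPolynomial.eval (fun k : {k : ℤ // k ≠ 0} => ∑ j : Fin n, Complex.exp ((k.1 : ℂ) * ζ j)) P

/-!
Write `E(ζ) = Σ_j cosh (Re ζ_j)`. Each power sum satisfies `|p_k(e^ζ)| ≤ n (2E)^{|k|} ≤ (2E)^{|k|+1}`,
so `|P(e^ζ)| ≤ C E(ζ)^B` with `B` the weighted degree of `P` (weight `|k| + 1` on `p_k`).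
Differentiating in `ζ_i` is controlled by Cauchy's estimate on the unit circle around `ζ_i`:
moving `Re ζ_i` by at most `1` multiplies `E` by at most `e`, so each derivative costs a factor
`e^B`. A duplicate-free `J` has at most `n` entries, which gives the bound `C e^{Bn} E^B`.
-/

open scoped ContDiff

namespace Real

theorem cosh_le_exp_abs_sub_mul_cosh (x y : ℝ) : cosh x ≤ exp |x - y| * cosh y := by
  have hpos : exp x ≤ exp |x - y| * exp y := by
    rw [← exp_add]; exact exp_le_exp.2 (by linarith [le_abs_self (x - y)])
  have hneg : exp (-x) ≤ exp |x - y| * exp (-y) := by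
    rw [← exp_add]; exact exp_le_exp.2 (by linarith [neg_abs_le (x - y)])
  rw [cosh_eq, cosh_eq]
  linarith

theorem exp_int_mul_le (k : ℤ) (x : ℝ) : exp (k * x) ≤ (2 * cosh x) ^ k.natAbs := by
  have habs : exp |x| ≤ 2 * cosh x := by
    rw [cosh_eq]
    rcases abs_cases x with ⟨h, _⟩ | ⟨h, _⟩ <;> rw [h] <;> linarith [exp_pos x, exp_pos (-x)]
  calc exp (k * x) ≤ exp (k.natAbs * |x|) := by
        refine exp_le_exp.2 ((le_abs_self _).trans ?_)
        rw [abs_mul, Nat.cast_natAbs, Int.cast_abs]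
    _ = exp |x| ^ k.natAbs := by rw [← exp_nat_mul]
    _ ≤ (2 * cosh x) ^ k.natAbs := pow_le_pow_left₀ (exp_nonneg _) habs _

end Real

section PolynomialGrowth

variable {σ 𝕜 : Type*} [NormedField 𝕜]

theorem MvPolynomial.norm_eval_le_of_norm_le_pow (P : MvPolynomial σ 𝕜) (w : σ → ℕ)
    {x : σ → 𝕜} {R : ℝ} (hR : 1 ≤ R) (hx : ∀ k, ‖x k‖ ≤ R ^ w k) :
    ‖MvPolynomial.eval x P‖ ≤
      (∑ d ∈ P.support, ‖P.coeff d‖) * R ^ P.weightedTotalDegree w := by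
  have hmonomial (d) (hd : d ∈ P.support) :
      ‖∏ k ∈ d.support, x k ^ d k‖ ≤ R ^ P.weightedTotalDegree w :=
    calc ‖∏ k ∈ d.support, x k ^ d k‖
        = ∏ k ∈ d.support, ‖x k‖ ^ d k := by simp only [norm_prod, norm_pow]
      _ ≤ ∏ k ∈ d.support, R ^ (d k * w k) := by
          gcongr with k
          rw [mul_comm, pow_mul]
          exact pow_le_pow_left₀ (norm_nonneg _) (hx k) _
      _ = R ^ Finsupp.weight w d := by rw [prod_pow_eq_pow_sum, Finsupp.weight_apply]; rfl
      _ ≤ R ^ P.weightedTotalDegree w :=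
          pow_le_pow_right₀ hR (MvPolynomial.le_weightedTotalDegree w hd)
  rw [MvPolynomial.eval_eq, sum_mul]
  refine (norm_sum_le _ _).trans (sum_le_sum fun d hd => ?_)
  rw [norm_mul]
  exact mul_le_mul_of_nonneg_left (hmonomial d hd) (norm_nonneg _)

end PolynomialGrowth

section MixedPartial

variable {n : ℕ}

theorem deriv_comp_update {g : (Fin n → ℂ) → ℂ} {ζ : Fin n → ℂ} (hg : DifferentiableAt ℂ g ζ)
    (i : Fin n) :
    deriv (fun t => g (Function.update ζ i t)) (ζ i) = fderiv ℂ g ζ (Pi.single i 1) := by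
  rw [← Function.update_eq_self i ζ] at hg
  have h := (hg.hasFDerivAt.comp_hasDerivAt (ζ i) (hasDerivAt_update ζ i (ζ i))).deriv
  rwa [Function.update_eq_self] at h

theorem mixedPartial_cons {f : (Fin n → ℂ) → ℂ} (i : Fin n) (l : List (Fin n))
    (hl : ContDiff ℂ ∞ (mixedPartial l f)) :
    mixedPartial (i :: l) f = fun ζ => fderiv ℂ (mixedPartial l f) ζ (Pi.single i 1) :=
  funext fun ζ => deriv_comp_update (hl.differentiable (by simp) ζ) i

theorem ContDiff.mixedPartial {f : (Fin n → ℂ) → ℂ} (hf : ContDiff ℂ ∞ f) :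
    ∀ J : List (Fin n), ContDiff ℂ ∞ (mixedPartial J f)
  | [] => hf
  | i :: l => by
    have hl := hf.mixedPartial l
    rw [mixedPartial_cons i l hl]
    exact (hl.fderiv_right le_rfl).clm_apply contDiff_const

end MixedPartial

section CoshSum

variable {n : ℕ}

noncomputable def coshSum (ζ : Fin n → ℂ) : ℝ := ∑ j, Real.cosh (ζ j).re

theorem natCast_le_coshSum (ζ : Fin n → ℂ) : (n : ℝ) ≤ coshSum ζ :=
  calc (n : ℝ) = ∑ _j : Fin n, (1 : ℝ) := by simp
    _ ≤ coshSum ζ := sum_le_sum fun _ _ => Real.one_le_cosh _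

theorem one_le_coshSum (hn : 1 ≤ n) (ζ : Fin n → ℂ) : 1 ≤ coshSum ζ :=
  le_trans (by exact_mod_cast hn) (natCast_le_coshSum ζ)

theorem coshSum_nonneg (ζ : Fin n → ℂ) : 0 ≤ coshSum ζ :=
  sum_nonneg fun _ _ => (Real.cosh_pos _).le

theorem cosh_le_coshSum (ζ : Fin n → ℂ) (j : Fin n) : Real.cosh (ζ j).re ≤ coshSum ζ :=
  single_le_sum (f := fun j => Real.cosh (ζ j).re) (fun _ _ => (Real.cosh_pos _).le) (mem_univ j)

theorem coshSum_update_le (ζ : Fin n → ℂ) (i : Fin n) {z : ℂ} (hz : ‖z - ζ i‖ ≤ 1) :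
    coshSum (Function.update ζ i z) ≤ Real.exp 1 * coshSum ζ := by
  rw [coshSum, coshSum, mul_sum]
  refine sum_le_sum fun j _ => ?_
  rcases eq_or_ne j i with rfl | hj
  · have hre : |z.re - (ζ j).re| ≤ 1 :=
      (Complex.sub_re z (ζ j) ▸ Complex.abs_re_le_norm _).trans hz
    rw [Function.update_self]
    exact (Real.cosh_le_exp_abs_sub_mul_cosh _ _).trans
      (mul_le_mul_of_nonneg_right (Real.exp_le_exp.2 hre) (Real.cosh_pos _).le)
  · rw [Function.update_of_ne hj]
    exact le_mul_of_one_le_left (Real.cosh_pos _).le (Real.one_le_exp zero_le_one)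

theorem norm_mixedPartial_le {f : (Fin n → ℂ) → ℂ} (hf : ContDiff ℂ ∞ f) {C : ℝ} (hC : 0 ≤ C)
    {B : ℕ} (hbound : ∀ ξ, ‖f ξ‖ ≤ C * coshSum ξ ^ B) :
    ∀ (J : List (Fin n)) (ζ : Fin n → ℂ),
      ‖mixedPartial J f ζ‖ ≤ C * Real.exp 1 ^ (B * J.length) * coshSum ζ ^ B
  | [], ζ => by simpa [mixedPartial] using hbound ζ
  | i :: l, ζ => by
    have hline : Differentiable ℂ fun t => mixedPartial l f (Function.update ζ i t) :=
      fun t => ((hf.mixedPartial l).differentiable (by simp) _).comp t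
        (hasDerivAt_update ζ i t).differentiableAt
    have hsphere : ∀ z ∈ Metric.sphere (ζ i) 1, ‖mixedPartial l f (Function.update ζ i z)‖ ≤
        C * Real.exp 1 ^ (B * l.length) * (Real.exp 1 * coshSum ζ) ^ B := by
      intro z hz
      refine (norm_mixedPartial_le hf hC hbound l _).trans ?_
      gcongr
      exacts [coshSum_nonneg _, coshSum_update_le ζ i (mem_sphere_iff_norm.1 hz).le]
    calc ‖mixedPartial (i :: l) f ζ‖
        ≤ C * Real.exp 1 ^ (B * l.length) * (Real.exp 1 * coshSum ζ) ^ B / 1 :=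
          Complex.norm_deriv_le_of_forall_mem_sphere_norm_le one_pos hline.diffContOnCl hsphere
      _ = C * Real.exp 1 ^ (B * (i :: l).length) * coshSum ζ ^ B := by
          rw [div_one, mul_pow, List.length_cons, mul_add_one, pow_add]; ring

end CoshSum

section EvalLaurent

variable {n : ℕ}

theorem norm_powerSum_exp_le (ζ : Fin n → ℂ) (k : ℤ) :
    ‖∑ j, Complex.exp (k * ζ j)‖ ≤ (2 * coshSum ζ) ^ (k.natAbs + 1) :=
  calc ‖∑ j, Complex.exp (k * ζ j)‖ ≤ ∑ j, ‖Complex.exp (k * ζ j)‖ := norm_sum_le _ _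
    _ ≤ ∑ _j : Fin n, (2 * coshSum ζ) ^ k.natAbs := by
        refine sum_le_sum fun j _ => ?_
        rw [Complex.norm_exp, ← Complex.ofReal_intCast, Complex.re_ofReal_mul]
        exact (Real.exp_int_mul_le k _).trans (by gcongr; exact cosh_le_coshSum ζ j)
    _ = n * (2 * coshSum ζ) ^ k.natAbs := by simp
    _ ≤ (2 * coshSum ζ) ^ (k.natAbs + 1) := by
        have := coshSum_nonneg ζ
        rw [pow_succ']
        gcongr
        linarith [natCast_le_coshSum ζ]

theorem norm_evalLaurent_le (P : MvPolynomial {k : ℤ // k ≠ 0} ℂ) (hn : 1 ≤ n)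
    (ζ : Fin n → ℂ) :
    ‖evalLaurent P ζ‖ ≤ (∑ d ∈ P.support, ‖P.coeff d‖) *
      (2 * coshSum ζ) ^ P.weightedTotalDegree fun k => k.1.natAbs + 1 :=
  P.norm_eval_le_of_norm_le_pow _ (by linarith [one_le_coshSum hn ζ])
    fun k => norm_powerSum_exp_le ζ k.1

theorem contDiff_evalLaurent (P : MvPolynomial {k : ℤ // k ≠ 0} ℂ) :
    ContDiff ℂ ∞ (evalLaurent P : (Fin n → ℂ) → ℂ) := by
  change ContDiff ℂ ∞ fun ζ : Fin n → ℂ =>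
    MvPolynomial.eval (fun k : {k : ℤ // k ≠ 0} => ∑ j, Complex.exp (k.1 * ζ j)) P
  induction P using MvPolynomial.induction_on with
  | C a => simpa only [MvPolynomial.eval_C] using contDiff_const
  | add p q hp hq => simpa only [map_add] using hp.add hq
  | mul_X p k hp =>
    simp only [map_mul, MvPolynomial.eval_X]
    exact hp.mul (by fun_prop)

end EvalLaurent

/-- For any symmetric Laurent polynomial `P` there are constants `a, b > 0`
such that for all `n ≥ 1`, all `ζ ∈ ℂⁿ` and every set `J` of coordinates
(encoded as a duplicate-free list), `|∂_J P(e^ζ)| ≤ aⁿ · E(Re ζ)^b`, where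
`E(θ) = Σ_j cosh θ_j`. -/
theorem laurent_mixed_partial_bound (P : MvPolynomial {k : ℤ // k ≠ 0} ℂ) :
    ∃ a > (0 : ℝ), ∃ b > (0 : ℝ), ∀ n : ℕ, 1 ≤ n → ∀ ζ : Fin n → ℂ,
      ∀ J : List (Fin n), J.Nodup →
        ‖mixedPartial J (evalLaurent P) ζ‖
          ≤ a ^ n * (∑ j : Fin n, Real.cosh (ζ j).re) ^ b := by
  set B := P.weightedTotalDegree fun k => k.1.natAbs + 1
  set C := (∑ d ∈ P.support, ‖P.coeff d‖) * 2 ^ B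
  have hC : 0 ≤ C := by positivity
  -- `B` may be `0`, but `b` has to be positive; `E ≥ 1` absorbs the extra power.
  refine ⟨(C + 1) * Real.exp 1 ^ B, by positivity, B + 1, by positivity, ?_⟩
  intro n hn ζ J hJ
  have hbound (ξ : Fin n → ℂ) : ‖evalLaurent P ξ‖ ≤ C * coshSum ξ ^ B :=
    (norm_evalLaurent_le P hn ξ).trans_eq (by rw [mul_pow, mul_assoc])
  have hJn : J.length ≤ n := by simpa using hJ.length_le_card
  have hE := one_le_coshSum hn ζ
  calc ‖mixedPartial J (evalLaurent P) ζ‖ ≤ C * Real.exp 1 ^ (B * J.length) * coshSum ζ ^ B :=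
        norm_mixedPartial_le (contDiff_evalLaurent P) hC hbound J ζ
    _ ≤ (C + 1) ^ n * Real.exp 1 ^ (B * n) * coshSum ζ ^ ((B : ℝ) + 1) := by
        rw [Real.rpow_add_one (by positivity), Real.rpow_natCast]
        gcongr
        · exact (le_add_of_nonneg_right zero_le_one).trans (le_self_pow₀ (by linarith) (by omega))
        · exact Real.one_le_exp zero_le_one
        · exact le_mul_of_one_le_right (by positivity) hE
    _ = ((C + 1) * Real.exp 1 ^ B) ^ n * coshSum ζ ^ ((B : ℝ) + 1) := by
        rw [mul_pow, ← pow_mul]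
end

section
/- Let h : ℝ^ℓ × ℝ^ℓ → ℂ be smooth and consider, for ξ ∈ ℝ^ℓ, the decomposition h(η+ξ, η) = Σ_{J ⊆ {1,…,ℓ}} δ_{J,ξ} h(η) · ∏_{j∈J} ξ_j, where δ_{J,ξ} h is the iterated finite difference quotient in the components indexed by J. This identity holds, and each |δ_{J,ξ} h(η)| is bounded by the supremum of the corresponding mixed partial derivative |∂_J h| (derivatives in the first group of variables). -/
open Finset

/-- The finite difference quotient `δ_{j,ξⱼ}` in the `j`-th first-group
variable: `(h(…, η_j + ξ_j, …, η) − h(…, η_j, …, η))/ξ_j`, extended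
continuously to `ξ_j = 0` by the partial derivative. -/
noncomputable def dq {ℓ : ℕ} (j : Fin ℓ) (ξj : ℝ)
    (g : (Fin ℓ → ℝ) → (Fin ℓ → ℝ) → ℂ) : (Fin ℓ → ℝ) → (Fin ℓ → ℝ) → ℂ :=
  fun θ η =>
    if ξj = 0 then deriv (fun t : ℝ => g (Function.update θ j t) η) (η j)
    else (g (Function.update θ j (η j + ξj)) η - g (Function.update θ j (η j)) η) / ξj

/-- Iterated finite difference quotients `δ_{J,ξ} = ∏_{j∈J} δ_{j,ξ_j}`. -/
noncomputable def dqIter {ℓ : ℕ} (ξ : Fin ℓ → ℝ) :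
    List (Fin ℓ) → ((Fin ℓ → ℝ) → (Fin ℓ → ℝ) → ℂ) → ((Fin ℓ → ℝ) → (Fin ℓ → ℝ) → ℂ)
  | [], g => g
  | j :: l, g => dqIter ξ l (dq j (ξ j) g)

/-- The mixed partial derivative `∂_J` in the first-group variables. -/
noncomputable def mpdFirst {ℓ : ℕ} :
    List (Fin ℓ) → ((Fin ℓ → ℝ) → (Fin ℓ → ℝ) → ℂ) → ((Fin ℓ → ℝ) → (Fin ℓ → ℝ) → ℂ)
  | [], g => g
  | j :: l, g => fun θ η => deriv (fun t : ℝ => mpdFirst l g (Function.update θ j t) η) (θ j)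

namespace FDDAux

variable {ℓ : ℕ}

/-- partial derivative in the `j`-th first-group variable -/
noncomputable def pd (j : Fin ℓ) (g : (Fin ℓ → ℝ) → (Fin ℓ → ℝ) → ℂ) :
    (Fin ℓ → ℝ) → (Fin ℓ → ℝ) → ℂ :=
  fun θ η => deriv (fun t : ℝ => g (Function.update θ j t) η) (θ j)

noncomputable def unc (g : (Fin ℓ → ℝ) → (Fin ℓ → ℝ) → ℂ) :
    (Fin ℓ → ℝ) × (Fin ℓ → ℝ) → ℂ := fun p => g p.1 p.2

def Sm (g : (Fin ℓ → ℝ) → (Fin ℓ → ℝ) → ℂ) : Prop := ContDiff ℝ (⊤:ℕ∞) (unc g)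

noncomputable def vj (j : Fin ℓ) : (Fin ℓ → ℝ) × (Fin ℓ → ℝ) := (Pi.single j 1, 0)

lemma hasDerivAt_update (θ : Fin ℓ → ℝ) (j : Fin ℓ) (s : ℝ) :
    HasDerivAt (fun t : ℝ => Function.update θ j t) (Pi.single j 1) s := by
  have h : (fun t : ℝ => Function.update θ j t)
      = fun t : ℝ => θ + (t - θ j) • (Pi.single j 1 : Fin ℓ → ℝ) := by
    funext t i
    by_cases hij : i = j
    · subst hij; simp
    · simp [Function.update_of_ne hij, Pi.single_eq_of_ne hij]
  rw [h]
  have := (((hasDerivAt_id s).sub_const (θ j)).smul_const (Pi.single j 1 : Fin ℓ → ℝ)).const_add θ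
  simpa using this

lemma hasDerivAt_comp_update {g : (Fin ℓ → ℝ) → (Fin ℓ → ℝ) → ℂ} (hg : Sm g)
    (θ η : Fin ℓ → ℝ) (j : Fin ℓ) (s : ℝ) :
    HasDerivAt (fun t : ℝ => g (Function.update θ j t) η)
      (fderiv ℝ (unc g) (Function.update θ j s, η) (vj j)) s := by
  have h1 : HasDerivAt (fun t : ℝ => ((Function.update θ j t : Fin ℓ → ℝ), η)) (vj j) s :=
    (hasDerivAt_update θ j s).prodMk (hasDerivAt_const s η)
  exact ((hg.differentiable (by simp)
    (Function.update θ j s, η)).hasFDerivAt).comp_hasDerivAt s h1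

lemma pd_eq {g : (Fin ℓ → ℝ) → (Fin ℓ → ℝ) → ℂ} (hg : Sm g) (θ η : Fin ℓ → ℝ) (j : Fin ℓ) :
    pd j g θ η = fderiv ℝ (unc g) (θ, η) (vj j) := by
  have := (hasDerivAt_comp_update hg θ η j (θ j)).deriv
  rwa [Function.update_eq_self] at this

lemma pd_hasDerivAt {g : (Fin ℓ → ℝ) → (Fin ℓ → ℝ) → ℂ} (hg : Sm g)
    (θ η : Fin ℓ → ℝ) (j : Fin ℓ) (s : ℝ) :
    HasDerivAt (fun t : ℝ => g (Function.update θ j t) η)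
      (pd j g (Function.update θ j s) η) s := by
  rw [pd_eq hg]
  simpa [Function.update_idem] using hasDerivAt_comp_update hg θ η j s

lemma pd_smooth {g : (Fin ℓ → ℝ) → (Fin ℓ → ℝ) → ℂ} (hg : Sm g) (j : Fin ℓ) :
    Sm (pd j g) := by
  have h : unc (pd j g) = fun p => fderiv ℝ (unc g) p (vj j) := by
    funext p; exact pd_eq hg p.1 p.2 j
  rw [Sm, h]
  exact (hg.fderiv_right (m := (⊤:ℕ∞)) (by exact_mod_cast le_rfl)).clm_apply contDiff_const

lemma pd_comm {g : (Fin ℓ → ℝ) → (Fin ℓ → ℝ) → ℂ} (hg : Sm g) (j k : Fin ℓ)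
    (θ η : Fin ℓ → ℝ) : pd j (pd k g) θ η = pd k (pd j g) θ η := by
  have e1 : ∀ (a b : Fin ℓ), pd a (pd b g) θ η
      = fderiv ℝ (fderiv ℝ (unc g)) (θ, η) (vj a) (vj b) := by
    intro a b
    rw [pd_eq (pd_smooth hg b) θ η a]
    have h : unc (pd b g) = fun p => fderiv ℝ (unc g) p (vj b) := by
      funext p; exact pd_eq hg p.1 p.2 b
    rw [show fderiv ℝ (unc (pd b g)) (θ, η) = fderiv ℝ (fun p => fderiv ℝ (unc g) p (vj b)) (θ, η)
      from by rw [h]]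
    have hdiff : DifferentiableAt ℝ (fderiv ℝ (unc g)) (θ, η) :=
      ((hg.fderiv_right (m := (⊤:ℕ∞)) (by exact_mod_cast le_rfl)).differentiable
        (by simp)) (θ, η)
    rw [fderiv_clm_apply hdiff (differentiableAt_const (vj b))]
    simp
  rw [e1 j k, e1 k j]
  exact second_derivative_symmetric (f := unc g)
    (fun y => ((hg.differentiable (by simp)) y).hasFDerivAt)
    (((hg.fderiv_right (m := (⊤:ℕ∞)) (by exact_mod_cast le_rfl)).differentiable
      (by simp) (θ, η)).hasFDerivAt) (vj j) (vj k)

lemma dq_zero_eq (j : Fin ℓ) (g : (Fin ℓ → ℝ) → (Fin ℓ → ℝ) → ℂ) (θ η : Fin ℓ → ℝ) :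
    dq j 0 g θ η = pd j g (Function.update θ j (η j)) η := by
  simp [dq, pd, Function.update_idem]

lemma updMap_smooth (j : Fin ℓ) (a : (Fin ℓ → ℝ) → ℝ) (ha : ContDiff ℝ (⊤:ℕ∞) a) :
    ContDiff ℝ (⊤:ℕ∞) (fun p : (Fin ℓ → ℝ) × (Fin ℓ → ℝ) =>
      ((Function.update p.1 j (a p.2) : Fin ℓ → ℝ), p.2)) := by
  apply ContDiff.prodMk _ contDiff_snd
  rw [contDiff_pi]
  intro i
  by_cases hij : i = j
  · subst hij
    simp only [Function.update_self]
    exact ha.comp contDiff_snd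
  · simp only [Function.update_of_ne hij]
    exact ((ContinuousLinearMap.proj i : ((Fin ℓ → ℝ)) →L[ℝ] ℝ).contDiff).comp contDiff_fst

lemma dq_smooth {g : (Fin ℓ → ℝ) → (Fin ℓ → ℝ) → ℂ} (hg : Sm g) (j : Fin ℓ) (c : ℝ) :
    Sm (dq j c g) := by
  by_cases hc : c = 0
  · subst hc
    have h : unc (dq j 0 g) = (fun p => fderiv ℝ (unc g) p (vj j)) ∘
        (fun p : (Fin ℓ → ℝ) × (Fin ℓ → ℝ) =>
          ((Function.update p.1 j (p.2 j) : Fin ℓ → ℝ), p.2)) := by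
      funext p
      show dq j 0 g p.1 p.2 = _
      rw [dq_zero_eq]
      exact pd_eq hg _ _ j
    rw [Sm, h]
    exact ((hg.fderiv_right (m := (⊤:ℕ∞)) (by exact_mod_cast le_rfl)).clm_apply
      contDiff_const).comp (updMap_smooth j (fun η => η j)
        ((ContinuousLinearMap.proj j : ((Fin ℓ → ℝ)) →L[ℝ] ℝ).contDiff))
  · have h : unc (dq j c g) = fun p : (Fin ℓ → ℝ) × (Fin ℓ → ℝ) =>
        (unc g ((Function.update p.1 j (p.2 j + c) : Fin ℓ → ℝ), p.2)
          - unc g ((Function.update p.1 j (p.2 j) : Fin ℓ → ℝ), p.2)) / c := by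
      funext p
      show dq j c g p.1 p.2 = _
      rw [dq]; simp only [if_neg hc]; rfl
    rw [Sm, h]
    have h1 := hg.comp (updMap_smooth j (fun η => η j + c)
      (((ContinuousLinearMap.proj j : ((Fin ℓ → ℝ)) →L[ℝ] ℝ).contDiff).add contDiff_const))
    have h2 := hg.comp (updMap_smooth j (fun η => η j)
      ((ContinuousLinearMap.proj j : ((Fin ℓ → ℝ)) →L[ℝ] ℝ).contDiff))
    exact (h1.sub h2).div_const c

lemma pd_comp_update (H : (Fin ℓ → ℝ) → (Fin ℓ → ℝ) → ℂ) {j k : Fin ℓ} (hkj : k ≠ j)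
    (a : (Fin ℓ → ℝ) → ℝ) (θ η : Fin ℓ → ℝ) :
    pd k (fun θ' η' => H (Function.update θ' j (a η')) η') θ η
      = pd k H (Function.update θ j (a η)) η := by
  dsimp only [pd]
  have e : (fun t : ℝ => H (Function.update (Function.update θ k t) j (a η)) η)
      = fun t : ℝ => H (Function.update (Function.update θ j (a η)) k t) η := by
    funext t; rw [Function.update_comm hkj]
  rw [e, Function.update_of_ne hkj]

lemma pd_dq_comm {G : (Fin ℓ → ℝ) → (Fin ℓ → ℝ) → ℂ} (hG : Sm G) {j k : Fin ℓ}
    (hkj : k ≠ j) (c : ℝ) (θ η : Fin ℓ → ℝ) :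
    pd k (dq j c G) θ η = dq j c (pd k G) θ η := by
  by_cases hc : c = 0
  · subst hc
    have e : dq j (0:ℝ) G = fun θ' η' => pd j G (Function.update θ' j (η' j)) η' := by
      funext θ' η'; exact dq_zero_eq j G θ' η'
    rw [e, pd_comp_update (pd j G) hkj (fun η' => η' j) θ η, pd_comm hG k j,
      dq_zero_eq j (pd k G) θ η]
  · have key : ∀ b : ℝ,
        HasDerivAt (fun t : ℝ => G (Function.update (Function.update θ k t) j b) η)
          (pd k G (Function.update θ j b) η) (θ k) := by
      intro b
      have e : (fun t : ℝ => G (Function.update (Function.update θ k t) j b) η)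
          = fun t : ℝ => G (Function.update (Function.update θ j b) k t) η := by
        funext t; rw [Function.update_comm hkj]
      rw [e]
      have h2 := pd_hasDerivAt hG (Function.update θ j b) η k (θ k)
      have e2 : Function.update (Function.update θ j b) k (θ k)
          = Function.update θ j b := by
        rw [show θ k = (Function.update θ j b) k from (Function.update_of_ne hkj b θ).symm,
          Function.update_eq_self]
      rwa [e2] at h2
    have eL : pd k (dq j c G) θ η
        = deriv (fun t : ℝ => (G (Function.update (Function.update θ k t) j (η j + c)) η
            - G (Function.update (Function.update θ k t) j (η j)) η) / (c:ℂ)) (θ k) := by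
      dsimp only [pd]
      congr 1
      funext t
      simp only [dq, if_neg hc]
    rw [eL, show dq j c (pd k G) θ η = (pd k G (Function.update θ j (η j + c)) η
        - pd k G (Function.update θ j (η j)) η) / (c:ℂ) from by simp only [dq, if_neg hc]]
    exact (((key (η j + c)).sub (key (η j))).div_const c).deriv

lemma mpd_smooth {g : (Fin ℓ → ℝ) → (Fin ℓ → ℝ) → ℂ} (hg : Sm g) :
    ∀ L : List (Fin ℓ), Sm (mpdFirst L g)
  | [] => hg
  | j :: l => pd_smooth (mpd_smooth hg l) j

lemma mpd_dq_comm {g : (Fin ℓ → ℝ) → (Fin ℓ → ℝ) → ℂ} (hg : Sm g) (j : Fin ℓ) (c : ℝ) :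
    ∀ (l : List (Fin ℓ)), j ∉ l → mpdFirst l (dq j c g) = dq j c (mpdFirst l g) := by
  intro l
  induction l with
  | nil => intro _; rfl
  | cons k l' ih =>
    intro hj
    have hkj : k ≠ j := fun hkj => hj (hkj ▸ (List.mem_cons_self (a := k) (l := l')))
    have hj' : j ∉ l' := fun hm => hj (List.mem_cons_of_mem k hm)
    funext θ η
    show pd k (mpdFirst l' (dq j c g)) θ η = dq j c (mpdFirst (k :: l') g) θ η
    rw [ih hj']
    exact pd_dq_comm (mpd_smooth hg l') hkj c θ η

lemma bound_dq {G : (Fin ℓ → ℝ) → (Fin ℓ → ℝ) → ℂ} (hG : Sm G) {j : Fin ℓ} {C : ℝ}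
    (hb : ∀ θ η : Fin ℓ → ℝ, ‖pd j G θ η‖ ≤ C) (c : ℝ) (θ η : Fin ℓ → ℝ) :
    ‖dq j c G θ η‖ ≤ C := by
  by_cases hc : c = 0
  · subst hc
    rw [dq_zero_eq]
    exact hb _ _
  · rw [dq, if_neg hc]
    have hmvt := Convex.norm_image_sub_le_of_norm_hasDerivWithin_le
      (f := fun t : ℝ => G (Function.update θ j t) η)
      (f' := fun t : ℝ => pd j G (Function.update θ j t) η) (s := Set.univ)
      (fun x _ => (pd_hasDerivAt hG θ η j x).hasDerivWithinAt)
      (fun x _ => hb _ _) convex_univ (Set.mem_univ (η j)) (Set.mem_univ (η j + c))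
    have habs : ‖η j + c - η j‖ = |c| := by
      rw [add_sub_cancel_left, Real.norm_eq_abs]
    rw [habs] at hmvt
    rw [norm_div]
    have : ‖(c : ℂ)‖ = |c| := by
      rw [Complex.norm_real, Real.norm_eq_abs]
    rw [this, div_le_iff₀ (abs_pos.2 hc)]
    exact hmvt

lemma dqIter_bound (ξ : Fin ℓ → ℝ) :
    ∀ (L : List (Fin ℓ)), L.Nodup → ∀ g : (Fin ℓ → ℝ) → (Fin ℓ → ℝ) → ℂ, Sm g → ∀ C : ℝ,
      (∀ θ η : Fin ℓ → ℝ, ‖mpdFirst L g θ η‖ ≤ C) →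
      ∀ θ η : Fin ℓ → ℝ, ‖dqIter ξ L g θ η‖ ≤ C := by
  intro L
  induction L with
  | nil => intro _ g _ C hb θ η; exact hb θ η
  | cons j l ih =>
    intro hnd g hg C hb θ η
    have hj : j ∉ l := (List.nodup_cons.1 hnd).1
    show ‖dqIter ξ l (dq j (ξ j) g) θ η‖ ≤ C
    apply ih (List.nodup_cons.1 hnd).2 _ (dq_smooth hg j (ξ j)) C _ θ η
    intro θ' η'
    rw [mpd_dq_comm hg j (ξ j) l hj]
    exact bound_dq (mpd_smooth hg l) (fun θ'' η'' => hb θ'' η'') (ξ j) θ' η'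

lemma step1 (g : (Fin ℓ → ℝ) → (Fin ℓ → ℝ) → ℂ) (j : Fin ℓ) (ξj : ℝ) (θ η : Fin ℓ → ℝ) :
    g (Function.update θ j (η j + ξj)) η
      = g (Function.update θ j (η j)) η + dq j ξj g θ η * (ξj : ℂ) := by
  by_cases hc : ξj = 0
  · simp [dq, hc]
  · rw [dq, if_neg hc, div_mul_cancel₀ _ (by exact_mod_cast hc : (ξj:ℂ) ≠ 0)]
    ring

lemma dq_comm_ne (g : (Fin ℓ → ℝ) → (Fin ℓ → ℝ) → ℂ) (x y : Fin ℓ) (a b : ℝ)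
    (ha : a ≠ 0) (hb : b ≠ 0) : dq x a (dq y b g) = dq y b (dq x a g) := by
  funext θ η
  by_cases hxy : x = y
  · subst hxy
    simp only [dq, if_neg ha, if_neg hb, Function.update_idem]
    ring
  · simp only [dq, if_neg ha, if_neg hb]
    rw [Function.update_comm (Ne.symm hxy) (η y + b) (η x + a) θ,
      Function.update_comm (Ne.symm hxy) (η y + b) (η x) θ,
      Function.update_comm (Ne.symm hxy) (η y) (η x + a) θ,
      Function.update_comm (Ne.symm hxy) (η y) (η x) θ]
    ring

lemma dqIter_perm (ξ : Fin ℓ → ℝ) {L₁ L₂ : List (Fin ℓ)} (hp : L₁.Perm L₂)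
    (hξ : ∀ j ∈ L₁, ξ j ≠ 0) : ∀ g, dqIter ξ L₁ g = dqIter ξ L₂ g := by
  induction hp with
  | nil => intro g; rfl
  | cons x h ih =>
    intro g
    show dqIter ξ _ (dq x (ξ x) g) = dqIter ξ _ (dq x (ξ x) g)
    exact ih (fun j hj => hξ j (List.mem_cons_of_mem _ hj)) _
  | swap x y l =>
    intro g
    show dqIter ξ l (dq x (ξ x) (dq y (ξ y) g)) = dqIter ξ l (dq y (ξ y) (dq x (ξ x) g))
    rw [dq_comm_ne g x y (ξ x) (ξ y) (hξ x (by simp)) (hξ y (by simp))]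
  | trans h₁ h₂ ih₁ ih₂ =>
    intro g
    rw [ih₁ hξ g, ih₂ (fun j hj => hξ j (h₁.mem_iff.2 hj)) g]

lemma decomp (ξ η : Fin ℓ → ℝ) (S : Finset (Fin ℓ)) (hS : ∀ j ∈ S, ξ j ≠ 0)
    (g : (Fin ℓ → ℝ) → (Fin ℓ → ℝ) → ℂ) :
    g (fun i => if i ∈ S then η i + ξ i else η i) η
      = ∑ J ∈ S.powerset, dqIter ξ J.toList g η η * ((∏ j ∈ J, ξ j : ℝ) : ℂ) := by
  induction S using Finset.induction_on generalizing g with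
  | empty => simp [dqIter]
  | @insert j S hjS ih =>
    have hF : (fun i => if i ∈ insert j S then η i + ξ i else η i)
        = Function.update (fun i => if i ∈ S then η i + ξ i else η i) j (η j + ξ j) := by
      funext i
      by_cases hij : i = j
      · subst hij; simp [hjS]
      · simp [Function.update_of_ne hij, Finset.mem_insert, hij]
    have hξS : ∀ j' ∈ S, ξ j' ≠ 0 := fun j' hj' => hS j' (Finset.mem_insert_of_mem hj')
    have hξj : ξ j ≠ 0 := hS j (Finset.mem_insert_self j S)
    rw [hF, step1 g j (ξ j) (fun i => if i ∈ S then η i + ξ i else η i) η]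
    have hF2 : Function.update (fun i => if i ∈ S then η i + ξ i else η i) j (η j)
        = (fun i => if i ∈ S then η i + ξ i else η i) := by
      funext i
      by_cases hij : i = j
      · subst hij; simp [hjS]
      · simp [Function.update_of_ne hij]
    rw [hF2, ih hξS g, ih hξS (dq j (ξ j) g), Finset.sum_powerset_insert hjS, Finset.sum_mul]
    congr 1
    apply Finset.sum_congr rfl
    intro J hJ
    have hjJ : j ∉ J := fun hm => hjS (Finset.mem_powerset.1 hJ hm)
    have hperm := Finset.toList_insert hjJ
    have hne : ∀ i ∈ (insert j J).toList, ξ i ≠ 0 := by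
      intro i hi
      rw [Finset.mem_toList, Finset.mem_insert] at hi
      rcases hi with hi | hi
      · exact hi ▸ hξj
      · exact hξS i (Finset.mem_powerset.1 hJ hi)
    have : dqIter ξ ((insert j J).toList) g = dqIter ξ J.toList (dq j (ξ j) g) :=
      dqIter_perm ξ hperm hne g
    rw [this, Finset.prod_insert hjJ]
    push_cast
    ring

end FDDAux

/-- For a smooth `h : ℝ^ℓ × ℝ^ℓ → ℂ` the finite-difference decomposition
`h(η+ξ, η) = Σ_{J ⊆ {1,…,ℓ}} δ_{J,ξ} h(η) ∏_{j∈J} ξ_j` holds (with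
`δ_{∅,ξ} h(η) = h(η,η)`), and each `|δ_{J,ξ} h(η)|` is bounded by any bound on
the corresponding mixed partial derivative `|∂_J h|` in the first group of
variables. -/
theorem finite_difference_decomposition (ℓ : ℕ)
    (h : (Fin ℓ → ℝ) → (Fin ℓ → ℝ) → ℂ)
    (hsmooth : ContDiff ℝ (⊤ : ℕ∞) (fun p : (Fin ℓ → ℝ) × (Fin ℓ → ℝ) => h p.1 p.2))
    (ξ η : Fin ℓ → ℝ) :
    (h (fun i => η i + ξ i) η
      = ∑ J : Finset (Fin ℓ),
          dqIter ξ J.toList h η η * ((∏ j ∈ J, ξ j : ℝ) : ℂ)) ∧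
    (∀ (J : Finset (Fin ℓ)) (C : ℝ),
      (∀ θ' η' : Fin ℓ → ℝ, ‖mpdFirst J.toList h θ' η'‖ ≤ C) →
      ‖dqIter ξ J.toList h η η‖ ≤ C) := by
  have hSm : FDDAux.Sm h := hsmooth.of_le (by simp)
  constructor
  · classical
    set S : Finset (Fin ℓ) := Finset.univ.filter (fun j => ξ j ≠ 0) with hSdef
    have hLHS : (fun i => η i + ξ i) = fun i => if i ∈ S then η i + ξ i else η i := by
      funext i
      by_cases hi : ξ i = 0
      · simp [hSdef, hi]
      · simp [hSdef, hi]
    rw [hLHS, FDDAux.decomp ξ η S (fun j hj => (Finset.mem_filter.1 hj).2) h]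
    have huniv : (∑ J : Finset (Fin ℓ), dqIter ξ J.toList h η η * ((∏ j ∈ J, ξ j : ℝ) : ℂ))
        = ∑ J ∈ (Finset.univ : Finset (Fin ℓ)).powerset,
            dqIter ξ J.toList h η η * ((∏ j ∈ J, ξ j : ℝ) : ℂ) := by
      rw [Finset.powerset_univ]
    rw [huniv]
    apply Finset.sum_subset (Finset.powerset_mono.mpr (Finset.subset_univ S))
    intro J _ hJS
    obtain ⟨j, hjJ, hjS⟩ := Finset.not_subset.1 (fun hsub => hJS (Finset.mem_powerset.2 hsub))
    have hξj : ξ j = 0 := by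
      by_contra hne
      exact hjS (Finset.mem_filter.2 ⟨Finset.mem_univ j, hne⟩)
    rw [Finset.prod_eq_zero hjJ hξj]
    simp
  · intro J C hb
    exact FDDAux.dqIter_bound ξ J.toList (Finset.nodup_toList J) h hSm C hb η η
end

section
/- Let A be a quadratic form on a dense domain D × D in a Hilbert space H. Then A extends to a closed operator A⁻ with D ⊆ dom A⁻ ∩ dom (A⁻)*, D a core for A⁻, if and only if the matrix element ⟨ψ, Aχ⟩ extends continuously (linearly) in χ ∈ H for each fixed ψ ∈ D, and continuously (antilinearly) in ψ ∈ H for each fixed χ ∈ D. -/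
/-!
Given the bounds, Riesz representation on the dense subspace `D` turns `χ ↦ A(·, χ)` into an
operator `A₀ : D → H` with `⟪ψ, A₀ χ⟫ = A ψ χ`, and the bound in `χ` says precisely that
`D ⊆ dom A₀†`. A dense adjoint domain makes `A₀` closable, and `A⁻` is its closure, whose
adjoint domain still contains `D`. Conversely, the bounds are `‖A⁻† ψ‖` and `‖A⁻ χ‖`.
-/

open InnerProductSpace LinearPMap
open scoped InnerProductSpace

section Closable

variable {𝕜 E F : Type*} [RCLike 𝕜] [NormedAddCommGroup E] [InnerProductSpace 𝕜 E]
  [NormedAddCommGroup F] [InnerProductSpace 𝕜 F] [CompleteSpace E]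
  {T : E →ₗ.[𝕜] F}

theorem LinearPMap.inner_adjoint_fst_eq_of_mem_graph_closure (hT : Dense (T.domain : Set E))
    (y : T†.domain) {p : E × F} (hp : p ∈ T.graph.topologicalClosure) :
    ⟪T† y, p.1⟫_𝕜 = ⟪(y : F), p.2⟫_𝕜 := by
  have hclosed : _root_.IsClosed {p : E × F | ⟪T† y, p.1⟫_𝕜 = ⟪(y : F), p.2⟫_𝕜} :=
    isClosed_eq (continuous_const.inner continuous_fst) (continuous_const.inner continuous_snd)
  have hgraph : (T.graph : Set (E × F)) ⊆ {p : E × F | ⟪T† y, p.1⟫_𝕜 = ⟪(y : F), p.2⟫_𝕜} := by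
    intro q hq
    obtain ⟨x, hx₁, hx₂⟩ := (mem_graph_iff T).1 hq
    rw [Set.mem_ofPred_eq, ← hx₁, ← hx₂]
    exact adjoint_isFormalAdjoint hT y x
  exact closure_minimal hgraph hclosed (by rwa [← Submodule.topologicalClosure_coe])

theorem LinearPMap.isClosable_of_dense_adjoint_domain (hT : Dense (T.domain : Set E))
    (hT' : Dense (T†.domain : Set F)) : T.IsClosable := by
  refine ⟨T.graph.topologicalClosure.toLinearPMap,
    (Submodule.toLinearPMap_graph_eq _ fun p hp hp₁ => ?_).symm⟩
  refine hT'.eq_zero_of_inner_right 𝕜 fun y hy => ?_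
  have := T.inner_adjoint_fst_eq_of_mem_graph_closure hT ⟨y, hy⟩ hp
  rw [hp₁, inner_zero_right] at this
  exact this.symm

theorem LinearPMap.adjoint_domain_le_closure_adjoint_domain (hT : Dense (T.domain : Set E))
    (hclosable : T.IsClosable) : T†.domain ≤ T.closure†.domain := fun y hy =>
  mem_adjoint_domain_of_exists y ⟨T† ⟨y, hy⟩, fun x =>
    T.inner_adjoint_fst_eq_of_mem_graph_closure hT ⟨y, hy⟩ <| by
      rw [hclosable.graph_closure_eq_closure_graph]
      exact T.closure.mem_graph x⟩

end Closable

section DenseRiesz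

variable {𝕜 E : Type*} [RCLike 𝕜] [NormedAddCommGroup E] [InnerProductSpace 𝕜 E]
  [CompleteSpace E] {D : Submodule 𝕜 E}

theorem Dense.exists_inner_eq_of_norm_le (hD : Dense (D : Set E)) (f : D →ₗ[𝕜] 𝕜) (C : ℝ)
    (hf : ∀ x : D, ‖f x‖ ≤ C * ‖(x : E)‖) : ∃ w : E, ∀ x : D, ⟪w, (x : E)⟫_𝕜 = f x := by
  refine ⟨(toDual 𝕜 E).symm ((f.mkContinuous C hf).extend D.subtypeL), fun x => ?_⟩
  rw [toDual_symm_apply]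
  exact ContinuousLinearMap.extend_eq _ hD.denseRange_val
    isUniformEmbedding_subtype_val.isUniformInducing x

theorem Dense.exists_linearMap_inner_eq_of_form (hD : Dense (D : Set E))
    (A : D →ₗ⋆[𝕜] (D →ₗ[𝕜] 𝕜)) (hA : ∀ χ : D, ∃ C : ℝ, ∀ ψ : D, ‖A ψ χ‖ ≤ C * ‖(ψ : E)‖) :
    ∃ S : D →ₗ[𝕜] E, ∀ ψ χ : D, ⟪(ψ : E), S χ⟫_𝕜 = A ψ χ := by
  have hvec : ∀ χ : D, ∃ v : E, ∀ ψ : D, ⟪(ψ : E), v⟫_𝕜 = A ψ χ := fun χ => by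
    obtain ⟨C, hC⟩ := hA χ
    let f : D →ₗ[𝕜] 𝕜 :=
      { toFun := fun ψ => star (A ψ χ)
        map_add' := fun ψ ψ' => by simp
        map_smul' := fun c ψ => by simp }
    obtain ⟨v, hv⟩ := hD.exists_inner_eq_of_norm_le f C fun ψ => by simpa [f] using hC ψ
    exact ⟨v, fun ψ => by rw [← inner_conj_symm, hv]; simp [f]⟩
  choose S hS using hvec
  have hS_ext : ∀ {v v' : E}, (∀ ψ : D, ⟪(ψ : E), v⟫_𝕜 = ⟪(ψ : E), v'⟫_𝕜) → v = v' :=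
    fun h => hD.eq_of_inner_right 𝕜 fun ψ hψ => h ⟨ψ, hψ⟩
  refine ⟨{ toFun := S, map_add' := fun χ χ' => ?_, map_smul' := fun c χ => ?_ }, fun ψ χ => hS χ ψ⟩
  · exact hS_ext fun ψ => by simp only [inner_add_right, hS, LinearMap.map_add]
  · exact hS_ext fun ψ => by simp only [RingHom.id_apply, inner_smul_right, hS, LinearMap.map_smul,
      smul_eq_mul]

end DenseRiesz

/-- Closability criterion for quadratic forms.  Let `A` be a sesquilinear form
(conjugate-linear in the first slot) on a dense subspace `D` of a complex
Hilbert space `H`.  Then `A` extends to a closed operator `A⁻` with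
`D ⊆ dom A⁻ ∩ dom (A⁻)*` and `D` a core for `A⁻`, if and only if the matrix
element `⟨ψ, Aχ⟩` is bounded (hence extends continuously) in `χ` for each
fixed `ψ ∈ D`, and bounded in `ψ` for each fixed `χ ∈ D`. -/
theorem quadratic_form_closable_iff (H : Type*) [NormedAddCommGroup H]
    [InnerProductSpace ℂ H] [CompleteSpace H]
    (D : Submodule ℂ H) (hD : Dense (D : Set H))
    (A : D →ₗ⋆[ℂ] (D →ₗ[ℂ] ℂ)) :
    (∃ T : H →ₗ.[ℂ] H, ∃ hdom : D ≤ T.domain,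
        T.IsClosed ∧ D ≤ T.adjoint.domain ∧ (T.domRestrict D).closure = T ∧
        ∀ ψ χ : D, A ψ χ = (inner ℂ (ψ : H) (T ⟨(χ : H), hdom χ.2⟩) : ℂ))
      ↔ ((∀ ψ : D, ∃ C : ℝ, ∀ χ : D, ‖A ψ χ‖ ≤ C * ‖(χ : H)‖) ∧
         (∀ χ : D, ∃ C : ℝ, ∀ ψ : D, ‖A ψ χ‖ ≤ C * ‖(ψ : H)‖)) := by
  constructor
  · rintro ⟨T, hdom, -, hadj, -, hrep⟩
    refine ⟨fun ψ => ⟨‖T† ⟨ψ, hadj ψ.2⟩‖, fun χ => ?_⟩,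
      fun χ => ⟨‖T ⟨χ, hdom χ.2⟩‖, fun ψ => ?_⟩⟩
    · rw [hrep, ← adjoint_isFormalAdjoint (hD.mono hdom) ⟨ψ, hadj ψ.2⟩ ⟨χ, hdom χ.2⟩]
      exact norm_inner_le_norm _ _
    · rw [hrep, mul_comm]
      exact norm_inner_le_norm _ _
  · rintro ⟨hψ, hχ⟩
    obtain ⟨S, hS⟩ := hD.exists_linearMap_inner_eq_of_form A hχ
    let A₀ : H →ₗ.[ℂ] H := ⟨D, S⟩
    have hadj : D ≤ A₀†.domain := fun ψ hψD => by
      obtain ⟨C, hC⟩ := hψ ⟨ψ, hψD⟩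
      obtain ⟨w, hw⟩ := hD.exists_inner_eq_of_norm_le (A ⟨ψ, hψD⟩) C hC
      exact mem_adjoint_domain_of_exists ψ ⟨w, fun χ => (hw χ).trans (hS _ χ).symm⟩
    have hclosable : A₀.IsClosable := A₀.isClosable_of_dense_adjoint_domain hD (hD.mono hadj)
    refine ⟨A₀.closure, A₀.le_closure.1, hclosable.closure_isClosed,
      hadj.trans (A₀.adjoint_domain_le_closure_adjoint_domain hD hclosable),
      A₀.closureHasCore.closure_eq, fun ψ χ => ?_⟩
    rw [← A₀.le_closure.2 rfl]
    exact (hS ψ χ).symm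
end

section
/- Let U(t) be a strongly continuous one-parameter unitary group with positive generator on a Hilbert space H, with (up to scalars) unique invariant vector Ω. Suppose A, B are bounded operators such that B commutes with U(t) A U(t)* for all t ∈ ℝ. Then ⟨A*Ω, B Ω⟩ = ⟨A*Ω, Ω⟩⟨Ω, BΩ⟩, provided U(t) → |Ω⟩⟨Ω| weakly as t → ∞. -/
/-!
The matrix element `f t = ⟪A† Ω, U t (B Ω)⟫` has, by the spectrum condition, a bounded analytic
extension to the upper half-plane. Since `Ω` is invariant and `B` commutes with the translates
of `A`, the reflected function `f (-t) = ⟪B† Ω, U t (A Ω)⟫` is again a matrix element of `U`, so it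
has one as well. Gluing the two extensions along `ℝ` gives a continuous bounded function that is
holomorphic off `ℝ`, hence entire by Morera's theorem and constant by Liouville's theorem. So `f`
is constant: its value `⟪A† Ω, B Ω⟫` at `0` equals its limit `⟪A† Ω, Ω⟫ ⟪Ω, B Ω⟫` at `+∞`.
-/

open Filter Topology Set

namespace Complex

open intervalIntegral

variable {E : Type*} [NormedAddCommGroup E] [NormedSpace ℂ E]

theorem integral_boundary_rect_eq_zero_of_continuous_of_differentiableAt_of_im_ne_zero
    (f : ℂ → E) (hc : Continuous f) (hd : ∀ z : ℂ, z.im ≠ 0 → DifferentiableAt ℂ f z) (z w : ℂ) :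
    (∫ x : ℝ in z.re..w.re, f (x + z.im * I)) - (∫ x : ℝ in z.re..w.re, f (x + w.im * I)) +
      I • (∫ y : ℝ in z.im..w.im, f (w.re + y * I)) -
      I • (∫ y : ℝ in z.im..w.im, f (z.re + y * I)) = 0 := by
  -- cut the rectangle along the real axis; neither half meets it in its interior
  have half (c d : ℝ) (h0 : (0 : ℝ) ∉ Ioo (min c d) (max c d)) :
      (∫ x : ℝ in z.re..w.re, f (x + c * I)) - (∫ x : ℝ in z.re..w.re, f (x + d * I)) +
        I • (∫ y : ℝ in c..d, f (w.re + y * I)) - I • (∫ y : ℝ in c..d, f (z.re + y * I)) = 0 :=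
    integral_boundary_rect_eq_zero_of_continuousOn_of_differentiableOn f ⟨z.re, c⟩ ⟨w.re, d⟩
      hc.continuousOn fun u hu => (hd u fun him => h0 (him ▸ hu.2)).differentiableWithinAt
  have lower := half z.im 0 (by grind)
  have upper := half 0 w.im (by grind)
  have vertical (a : ℝ) : (∫ y : ℝ in z.im..0, f (a + y * I)) + (∫ y : ℝ in 0..w.im, f (a + y * I))
      = ∫ y : ℝ in z.im..w.im, f (a + y * I) := by
    have hcont : Continuous fun y : ℝ => f (a + y * I) := by fun_prop
    exact integral_add_adjacent_intervals (hcont.intervalIntegrable _ _)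
      (hcont.intervalIntegrable _ _)
  rw [← vertical, ← vertical]
  linear_combination (norm := module) lower + upper

theorem isConservativeOn_univ_of_continuous_of_differentiableAt_of_im_ne_zero {f : ℂ → E}
    (hc : Continuous f) (hd : ∀ z : ℂ, z.im ≠ 0 → DifferentiableAt ℂ f z) :
    IsConservativeOn f univ := fun z w _ => by
  rw [← add_eq_zero_iff_eq_neg, wedgeIntegral_add_wedgeIntegral_eq]
  exact integral_boundary_rect_eq_zero_of_continuous_of_differentiableAt_of_im_ne_zero f hc hd z w

theorem differentiable_of_continuous_of_differentiableAt_of_im_ne_zero [CompleteSpace E]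
    {f : ℂ → E} (hc : Continuous f) (hd : ∀ z : ℂ, z.im ≠ 0 → DifferentiableAt ℂ f z) :
    Differentiable ℂ f :=
  differentiableOn_univ.1 <|
    ((isConservativeOn_univ_of_continuous_of_differentiableAt_of_im_ne_zero hc hd).isExactOn_univ
      hc).differentiableOn isOpen_univ

theorem differentiableAt_of_eqOn_upper_of_eqOn_lower {F G h : ℂ → E}
    (hF : DifferentiableOn ℂ F {z | 0 < z.im}) (hG : DifferentiableOn ℂ G {z | 0 < z.im})
    (hhF : EqOn h F {z | 0 < z.im}) (hhG : EqOn h (fun z => G (-z)) {z | z.im < 0})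
    {z : ℂ} (hz : z.im ≠ 0) : DifferentiableAt ℂ h z := by
  have upper_mem_nhds {w : ℂ} (hw : 0 < w.im) : {z : ℂ | 0 < z.im} ∈ 𝓝 w :=
    (isOpen_lt continuous_const continuous_im).mem_nhds hw
  rcases hz.lt_or_gt with hlt | hgt
  · have hGz : DifferentiableAt ℂ G (-z) := hG.differentiableAt (upper_mem_nhds (by simpa using hlt))
    exact (hGz.comp z differentiableAt_id.neg).congr_of_eventuallyEq
      (eventuallyEq_of_mem ((isOpen_lt continuous_im continuous_const).mem_nhds hlt) hhG)
  · exact (hF.differentiableAt (upper_mem_nhds hgt)).congr_of_eventuallyEq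
      (eventuallyEq_of_mem (upper_mem_nhds hgt) hhF)

end Complex

section BoundaryValues

variable {E : Type*} [NormedAddCommGroup E] [NormedSpace ℂ E]

def HasBoundedUpperHalfPlaneExtension (f : ℝ → E) : Prop :=
  ∃ F : ℂ → E, ContinuousOn F {z | 0 ≤ z.im} ∧ DifferentiableOn ℂ F {z | 0 < z.im} ∧
    Bornology.IsBounded (F '' {z | 0 ≤ z.im}) ∧ ∀ t : ℝ, F t = f t

theorem HasBoundedUpperHalfPlaneExtension.apply_eq_apply [CompleteSpace E] {f : ℝ → E}
    (hf : HasBoundedUpperHalfPlaneExtension f)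
    (hf' : HasBoundedUpperHalfPlaneExtension fun t => f (-t)) (s t : ℝ) : f s = f t := by
  obtain ⟨F, hFc, hFd, hFb, hFf⟩ := hf
  obtain ⟨G, hGc, hGd, hGb, hGf⟩ := hf'
  let h : ℂ → E := fun z => if 0 ≤ z.im then F z else G (-z)
  have hcont : Continuous h := by
    refine continuous_if_le continuous_const Complex.continuous_im hFc
      (hGc.comp continuous_neg.continuousOn fun z (hz : z.im ≤ 0) => by simpa using hz) ?_
    intro z hz
    have hre : ((z.re : ℝ) : ℂ) = z := Complex.ext rfl (by simp [hz])
    simpa [hre] using (hFf z.re).trans ((hGf (-z.re)).trans (by simp)).symm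
  have hdiff : Differentiable ℂ h :=
    Complex.differentiable_of_continuous_of_differentiableAt_of_im_ne_zero hcont fun _ =>
      Complex.differentiableAt_of_eqOn_upper_of_eqOn_lower hFd hGd (fun _ hw => if_pos hw.le)
        fun _ hw => if_neg (not_le.2 hw)
  have hbdd : Bornology.IsBounded (range h) := by
    refine (hFb.union hGb).subset ?_
    rintro _ ⟨z, rfl⟩
    by_cases hz : 0 ≤ z.im
    · exact .inl ⟨z, hz, (if_pos hz).symm⟩
    · exact .inr ⟨-z, by simpa using (not_le.1 hz).le, (if_neg hz).symm⟩
  simpa [h, hFf] using hdiff.apply_eq_apply_of_bounded hbdd s t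

end BoundaryValues

section UnitaryGroup

variable {H : Type*} [NormedAddCommGroup H] [InnerProductSpace ℂ H] {U : ℝ → H →L[ℂ] H}

theorem apply_apply_neg (hU0 : U 0 = ContinuousLinearMap.id ℂ H)
    (hUgroup : ∀ s t : ℝ, U (s + t) = (U s) ∘L (U t)) (t : ℝ) (x : H) : U t (U (-t) x) = x := by
  simpa [hU0] using congr($(hUgroup t (-t)) x).symm

theorem apply_neg_apply (hU0 : U 0 = ContinuousLinearMap.id ℂ H)
    (hUgroup : ∀ s t : ℝ, U (s + t) = (U s) ∘L (U t)) (t : ℝ) (x : H) : U (-t) (U t x) = x := by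
  simpa using apply_apply_neg hU0 hUgroup (-t) x

theorem inner_apply_neg (hU0 : U 0 = ContinuousLinearMap.id ℂ H)
    (hUgroup : ∀ s t : ℝ, U (s + t) = (U s) ∘L (U t)) (hUiso : ∀ (t : ℝ) (x : H), ‖U t x‖ = ‖x‖)
    (t : ℝ) (x y : H) : (inner ℂ x (U (-t) y) : ℂ) = inner ℂ (U t x) y :=
  calc (inner ℂ x (U (-t) y) : ℂ)
      = inner ℂ (U t x) (U t (U (-t) y)) :=
        (LinearIsometry.inner_map_map ⟨(U t : H →ₗ[ℂ] H), hUiso t⟩ x _).symm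
    _ = inner ℂ (U t x) y := by rw [apply_apply_neg hU0 hUgroup]

theorem apply_neg_apply_comm (hU0 : U 0 = ContinuousLinearMap.id ℂ H)
    (hUgroup : ∀ s t : ℝ, U (s + t) = (U s) ∘L (U t)) {A B : H →L[ℂ] H} {t : ℝ}
    (hcomm : B ∘L ((U t) ∘L A ∘L (U (-t))) = ((U t) ∘L A ∘L (U (-t))) ∘L B) (x : H) :
    U (-t) (B (U t (A x))) = A (U (-t) (B (U t x))) := by
  simpa only [ContinuousLinearMap.comp_apply, apply_neg_apply hU0 hUgroup] using
    congr(U (-t) ($hcomm (U t x)))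

theorem inner_adjoint_apply_neg_eq [CompleteSpace H] (hU0 : U 0 = ContinuousLinearMap.id ℂ H)
    (hUgroup : ∀ s t : ℝ, U (s + t) = (U s) ∘L (U t)) (hUiso : ∀ (t : ℝ) (x : H), ‖U t x‖ = ‖x‖)
    {Ω : H} (hΩinv : ∀ t : ℝ, U t Ω = Ω) {A B : H →L[ℂ] H} {t : ℝ}
    (hcomm : B ∘L ((U t) ∘L A ∘L (U (-t))) = ((U t) ∘L A ∘L (U (-t))) ∘L B) :
    (inner ℂ ((ContinuousLinearMap.adjoint A) Ω) (U (-t) (B Ω)) : ℂ)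
      = inner ℂ ((ContinuousLinearMap.adjoint B) Ω) (U t (A Ω)) :=
  calc (inner ℂ ((ContinuousLinearMap.adjoint A) Ω) (U (-t) (B Ω)) : ℂ)
      = inner ℂ Ω (A (U (-t) (B (U t Ω)))) := by
        rw [ContinuousLinearMap.adjoint_inner_left, hΩinv]
    _ = inner ℂ (U t Ω) (B (U t (A Ω))) := by
        rw [← apply_neg_apply_comm hU0 hUgroup hcomm, inner_apply_neg hU0 hUgroup hUiso]
    _ = inner ℂ ((ContinuousLinearMap.adjoint B) Ω) (U t (A Ω)) := by
        rw [ContinuousLinearMap.adjoint_inner_left, hΩinv]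

end UnitaryGroup

theorem cluster_factorization_general (H : Type*) [NormedAddCommGroup H]
    [InnerProductSpace ℂ H] [CompleteSpace H]
    (U : ℝ → H →L[ℂ] H)
    (hU0 : U 0 = ContinuousLinearMap.id ℂ H)
    (hUgroup : ∀ s t : ℝ, U (s + t) = (U s) ∘L (U t))
    (hUiso : ∀ (t : ℝ) (x : H), ‖U t x‖ = ‖x‖)
    (hpos : ∀ ψ φ : H, ∃ F : ℂ → ℂ,
      ContinuousOn F {z : ℂ | 0 ≤ z.im} ∧
      DifferentiableOn ℂ F {z : ℂ | 0 < z.im} ∧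
      (∀ z : ℂ, 0 ≤ z.im → ‖F z‖ ≤ ‖ψ‖ * ‖φ‖) ∧
      (∀ t : ℝ, F t = (inner ℂ ψ (U t φ) : ℂ)))
    (Ω : H) (hΩinv : ∀ t : ℝ, U t Ω = Ω)
    (A B : H →L[ℂ] H)
    (hcomm : ∀ t : ℝ,
      B ∘L ((U t) ∘L A ∘L (U (-t))) = ((U t) ∘L A ∘L (U (-t))) ∘L B)
    (hweak : ∀ ψ φ : H,
      Tendsto (fun t : ℝ => (inner ℂ ψ (U t φ) : ℂ)) atTop
        (𝓝 ((inner ℂ ψ Ω : ℂ) * (inner ℂ Ω φ : ℂ)))) :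
    (inner ℂ ((ContinuousLinearMap.adjoint A) Ω) (B Ω) : ℂ)
      = (inner ℂ ((ContinuousLinearMap.adjoint A) Ω) Ω : ℂ) * (inner ℂ Ω (B Ω) : ℂ) := by
  have hext (ψ φ : H) : HasBoundedUpperHalfPlaneExtension fun t => (inner ℂ ψ (U t φ) : ℂ) := by
    obtain ⟨F, hFc, hFd, hFb, hFt⟩ := hpos ψ φ
    exact ⟨F, hFc, hFd, isBounded_iff_forall_norm_le.2 ⟨_, by rintro _ ⟨z, hz, rfl⟩; exact hFb z hz⟩,
      hFt⟩
  set f : ℝ → ℂ := fun t => inner ℂ ((ContinuousLinearMap.adjoint A) Ω) (U t (B Ω))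
  have hf_reflect : HasBoundedUpperHalfPlaneExtension fun t => f (-t) := by
    simpa only [f, inner_adjoint_apply_neg_eq hU0 hUgroup hUiso hΩinv (hcomm _)] using
      hext ((ContinuousLinearMap.adjoint B) Ω) (A Ω)
  have hf_const (t : ℝ) : f 0 = f t := (hext _ _).apply_eq_apply hf_reflect 0 t
  have hf_zero : f 0 = inner ℂ ((ContinuousLinearMap.adjoint A) Ω) (B Ω) := by simp [f, hU0]
  rw [← hf_zero]
  exact tendsto_nhds_unique (tendsto_const_nhds.congr hf_const) (hweak _ (B Ω))

/-- Cluster-type factorization from the spectrum condition.  Let `U` be a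
strongly continuous one-parameter unitary group on a complex Hilbert space
`H` whose generator is positive — encoded, as is equivalent, by the property
that every matrix element `t ↦ ⟨ψ, U(t)φ⟩` is the boundary value of a bounded
continuous function on the closed upper half-plane, analytic in its
interior — with (up to scalars) unique invariant unit vector `Ω`.  If `A, B`
are bounded operators such that `B` commutes with `U(t) A U(t)* = U(t) A U(-t)`
for all `t`, and `U(t) → |Ω⟩⟨Ω|` weakly as `t → ∞`, then
`⟨A*Ω, BΩ⟩ = ⟨A*Ω, Ω⟩ ⟨Ω, BΩ⟩`. -/
theorem cluster_factorization (H : Type*) [NormedAddCommGroup H]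
    [InnerProductSpace ℂ H] [CompleteSpace H]
    (U : ℝ → H →L[ℂ] H)
    (hU0 : U 0 = ContinuousLinearMap.id ℂ H)
    (hUgroup : ∀ s t : ℝ, U (s + t) = (U s) ∘L (U t))
    (hUiso : ∀ (t : ℝ) (x : H), ‖U t x‖ = ‖x‖)
    (hUcont : ∀ x : H, Continuous fun t : ℝ => U t x)
    (hpos : ∀ ψ φ : H, ∃ F : ℂ → ℂ,
      ContinuousOn F {z : ℂ | 0 ≤ z.im} ∧
      DifferentiableOn ℂ F {z : ℂ | 0 < z.im} ∧
      (∀ z : ℂ, 0 ≤ z.im → ‖F z‖ ≤ ‖ψ‖ * ‖φ‖) ∧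
      (∀ t : ℝ, F t = (inner ℂ ψ (U t φ) : ℂ)))
    (Ω : H) (hΩnorm : ‖Ω‖ = 1) (hΩinv : ∀ t : ℝ, U t Ω = Ω)
    (hΩuniq : ∀ ψ : H, (∀ t : ℝ, U t ψ = ψ) → ∃ c : ℂ, ψ = c • Ω)
    (A B : H →L[ℂ] H)
    (hcomm : ∀ t : ℝ,
      B ∘L ((U t) ∘L A ∘L (U (-t))) = ((U t) ∘L A ∘L (U (-t))) ∘L B)
    (hweak : ∀ ψ φ : H,
      Tendsto (fun t : ℝ => (inner ℂ ψ (U t φ) : ℂ)) atTop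
        (𝓝 ((inner ℂ ψ Ω : ℂ) * (inner ℂ Ω φ : ℂ)))) :
    (inner ℂ ((ContinuousLinearMap.adjoint A) Ω) (B Ω) : ℂ)
      = (inner ℂ ((ContinuousLinearMap.adjoint A) Ω) Ω : ℂ) * (inner ℂ Ω (B Ω) : ℂ) :=
  cluster_factorization_general H U hU0 hUgroup hUiso hpos Ω hΩinv A B hcomm hweak
end
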